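/- arXiv:math/0703289 — 8 statements merged into one kernel-verified Lean document; each statement's English description precedes it below -/
import Mathlib

section
/- Let (X_n)_{n∈ℤ} satisfy the assumptions of Sect. 2 for discrete time, and split X_n = X_n^past + X_n^future with X_n^past = Σ_{j≤0} a_{j−n} ξ_j and X_n^future = Σ_{j>0} a_{j−n} ξ_j. Then there exists ε > 0 such that, almost surely, sup_{n≥0} (n+1)^{1+ε} |X_{−n}^future| < ∞ and sup_{n>0} n^{1+ε} |X_n^past| < ∞. -/
/-!
Fix a coordinate `i`. For a finite set `F` of indices, `(∑_{j ∈ F} A_j ξ_j)_i` is a sum of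
independent centred Gaussians, hence sub-Gaussian with variance proxy at most
`v = ∑_j ‖A_j‖²`; the Chernoff bound passes to the almost sure limit of the series, and a union
bound over the `d` coordinates gives `P(‖Y‖ > t) ≤ 2d exp(-(t/d)² / 2v)`.
In `X_{-n}^future` (resp. `X_n^past`, `n ≥ 1`) every coefficient `a_k` has `|k| ≥ n + 1`
(resp. `|k| ≥ n`), so the decay `‖a_k‖ = O(|k|^{-3/2-ε})` gives `v = O(n^{-2-ε})`. With
`t = n^{-1-ε/4}` the tail probabilities are `O(exp(-c n^{ε/2}))`, which is summable, and
Borel–Cantelli bounds `n^{1+ε/4} ‖X‖` almost surely.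
-/

open MeasureTheory ProbabilityTheory Filter Topology

attribute [local instance] Matrix.frobeniusNormedAddCommGroup Matrix.frobeniusNormedSpace

/-- The standard Gaussian measure `γ^d` on `ℝ^d`. -/
noncomputable def stdGaussian (d : ℕ) : Measure (EuclideanSpace ℝ (Fin d)) :=
  (Measure.pi fun _ : Fin d => gaussianReal 0 1).map
    (MeasurableEquiv.toLp 2 (Fin d → ℝ))

open Real
open scoped ENNReal NNReal

lemma stdGaussian_eq_stdGaussian_euclideanSpace (d : ℕ) :
    _root_.stdGaussian d = ProbabilityTheory.stdGaussian (EuclideanSpace ℝ (Fin d)) :=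
  map_pi_eq_stdGaussian

namespace ProbabilityTheory

variable {Ω : Type*} [MeasurableSpace Ω] {μ : Measure Ω} {X : Ω → ℝ} {c c' : ℝ≥0}

lemma HasSubgaussianMGF.mono (h : HasSubgaussianMGF X c μ) (hc : c ≤ c') :
    HasSubgaussianMGF X c' μ :=
  ⟨h.integrable_exp_mul, fun t => (h.mgf_le t).trans (exp_le_exp.2 (by gcongr))⟩

lemma HasSubgaussianMGF.measureReal_abs_ge_le [IsFiniteMeasure μ] (h : HasSubgaussianMGF X c μ)
    {ε : ℝ} (hε : 0 ≤ ε) :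
    μ.real {ω | ε ≤ |X ω|} ≤ 2 * exp (-ε ^ 2 / (2 * c)) := by
  have hsplit : {ω | ε ≤ |X ω|} = {ω | ε ≤ X ω} ∪ {ω | ε ≤ (-X) ω} := by
    ext ω; exact le_abs (a := ε)
  calc μ.real {ω | ε ≤ |X ω|}
      ≤ μ.real {ω | ε ≤ X ω} + μ.real {ω | ε ≤ (-X) ω} := hsplit ▸ measureReal_union_le _ _
    _ ≤ 2 * exp (-ε ^ 2 / (2 * c)) := by
      linarith [h.measure_ge_le hε, h.neg.measure_ge_le hε]

lemma hasSubgaussianMGF_id_gaussianReal (v : ℝ≥0) : HasSubgaussianMGF id v (gaussianReal 0 v) :=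
  ⟨integrable_exp_mul_gaussianReal, fun t => by simp [mgf_id_gaussianReal]⟩

variable {E : Type*} [NormedAddCommGroup E] [InnerProductSpace ℝ E] [FiniteDimensional ℝ E]
  [MeasurableSpace E] [BorelSpace E]

lemma hasSubgaussianMGF_strongDual_stdGaussian (L : StrongDual ℝ E) :
    HasSubgaussianMGF L (‖L‖₊ ^ 2) (stdGaussian E) := by
  have hlaw : (stdGaussian E).map L = gaussianReal 0 (‖L‖₊ ^ 2) := by
    rw [IsGaussian.map_eq_gaussianReal, integral_strongDual_stdGaussian,
      variance_dual_stdGaussian]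
    congr
    ext; simp
  rw [← HasSubgaussianMGF.id_map_iff L.continuous.aemeasurable, hlaw]
  exact hasSubgaussianMGF_id_gaussianReal _

lemma hasSubgaussianMGF_strongDual_comp {Y : Ω → E} (hY : AEMeasurable Y μ)
    (hlaw : μ.map Y = stdGaussian E) (L : StrongDual ℝ E) :
    HasSubgaussianMGF (fun ω => L (Y ω)) (‖L‖₊ ^ 2) μ :=
  .of_map (X := L) hY (hlaw ▸ hasSubgaussianMGF_strongDual_stdGaussian L)

end ProbabilityTheory

lemma EuclideanSpace.norm_le_sum_abs {ι : Type*} [Fintype ι] (v : EuclideanSpace ℝ ι) :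
    ‖v‖ ≤ ∑ i, |v i| := by
  conv_lhs => rw [← (EuclideanSpace.basisFun ι ℝ).sum_repr v]
  refine (norm_sum_le _ _).trans_eq ?_
  simp [norm_smul]

lemma Matrix.toEuclideanLin_apply_eq_inner {m n : Type*} [Fintype n] [DecidableEq n]
    (A : Matrix m n ℝ) (x : EuclideanSpace ℝ n) (i : m) :
    Matrix.toEuclideanLin A x i = inner ℝ (WithLp.toLp 2 (A i)) x := by
  simp [Matrix.toEuclideanLin, Matrix.mulVec, dotProduct, PiLp.inner_apply, mul_comm]

lemma Matrix.norm_toLp_row_le_frobenius {m n : Type*} [Fintype m] [Fintype n]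
    (A : Matrix m n ℝ) (i : m) : ‖WithLp.toLp 2 (A i)‖ ≤ ‖A‖ :=
  PiLp.norm_apply_le (WithLp.toLp 2 fun i => WithLp.toLp 2 (A i)) i

lemma measure_lt_le_of_ae_tendsto {Ω : Type*} [MeasurableSpace Ω] {P : Measure Ω}
    {f : ℕ → Ω → ℝ} {g : Ω → ℝ} (hfg : ∀ᵐ ω ∂P, Tendsto (fun N => f N ω) atTop (𝓝 (g ω)))
    {t : ℝ} {B : ℝ≥0∞} (hB : ∀ N, P {ω | t < f N ω} ≤ B) :
    P {ω | t < g ω} ≤ B := by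
  set C : ℕ → Set Ω := fun M => ⋂ N ≥ M, {ω | t < f N ω}
  have hC : Monotone C := fun M M' h =>
    Set.biInter_mono (fun N (hN : M' ≤ N) => h.trans hN) fun _ _ => le_rfl
  have hsub : {ω | t < g ω} ≤ᵐ[P] ⋃ M, C M := by
    filter_upwards [hfg] with ω hω hlt
    obtain ⟨M, hM⟩ := (hω.eventually (eventually_gt_nhds hlt)).exists_forall_of_atTop
    exact Set.mem_iUnion.2 ⟨M, Set.mem_iInter₂.2 hM⟩
  calc P {ω | t < g ω} ≤ P (⋃ M, C M) := measure_mono_ae hsub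
    _ = ⨆ M, P (C M) := hC.measure_iUnion
    _ ≤ B := iSup_le fun M => (measure_mono (Set.biInter_subset_of_mem le_rfl)).trans (hB M)

lemma measure_lt_norm_le_of_forall_measure_le_abs {d : ℕ} {Ω : Type*} [MeasurableSpace Ω]
    {P : Measure Ω} {Y : Ω → EuclideanSpace ℝ (Fin d)} {t : ℝ} {B : ℝ≥0∞} (ht : 0 ≤ t)
    (hB : ∀ i, P {ω | t / d ≤ |Y ω i|} ≤ B) :
    P {ω | t < ‖Y ω‖} ≤ d * B := by
  have hcover : {ω | t < ‖Y ω‖} ⊆ ⋃ i, {ω | t / d ≤ |Y ω i|} := by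
    intro ω hω
    by_contra hcon
    simp only [Set.mem_iUnion, Set.mem_ofPred_eq, not_exists, not_le] at hω hcon
    have hsum : ∑ i, |Y ω i| ≤ d * (t / d) := by
      simpa using Finset.sum_le_card_nsmul Finset.univ _ _ fun i _ => (hcon i).le
    have hdt : (d : ℝ) * (t / d) ≤ t := by
      rcases eq_or_ne (d : ℝ) 0 with h | h <;> simp [h, ht, mul_div_cancel₀]
    linarith [EuclideanSpace.norm_le_sum_abs (Y ω)]
  calc P {ω | t < ‖Y ω‖} ≤ ∑ i, P {ω | t / d ≤ |Y ω i|} :=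
        (measure_mono hcover).trans (measure_iUnion_fintype_le _ _)
    _ ≤ ∑ _i : Fin d, B := Finset.sum_le_sum fun i _ => hB i
    _ = d * B := by simp

section GaussianSeries

variable {d : ℕ} {Ω : Type*} [MeasurableSpace Ω] {P : Measure Ω}
  {ι : Type*} {ξ : ι → Ω → EuclideanSpace ℝ (Fin d)}

lemma hasSubgaussianMGF_sum_inner (hmeas : ∀ j, Measurable (ξ j)) (hindep : iIndepFun ξ P)
    (hlaw : ∀ j, P.map (ξ j) = _root_.stdGaussian d) (w : ι → EuclideanSpace ℝ (Fin d))
    (F : Finset ι) :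
    HasSubgaussianMGF (fun ω => ∑ j ∈ F, inner ℝ (w j) (ξ j ω)) (∑ j ∈ F, ‖w j‖₊ ^ 2) P := by
  have hL (j : ι) : ‖innerSL ℝ (w j)‖₊ = ‖w j‖₊ := Subtype.ext (innerSL_apply_norm ℝ (w j))
  simp_rw [← innerSL_apply_apply ℝ, ← hL]
  exact HasSubgaussianMGF.sum_of_iIndepFun
    (hindep.comp _ fun j => (innerSL ℝ (w j)).continuous.measurable) fun j _ =>
      hasSubgaussianMGF_strongDual_comp (hmeas j).aemeasurable
        (by rw [hlaw, stdGaussian_eq_stdGaussian_euclideanSpace]) _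

variable [IsFiniteMeasure P]

lemma measure_lt_norm_sum_le (hmeas : ∀ j, Measurable (ξ j)) (hindep : iIndepFun ξ P)
    (hlaw : ∀ j, P.map (ξ j) = _root_.stdGaussian d) (A : ι → Matrix (Fin d) (Fin d) ℝ)
    (F : Finset ι) {v t : ℝ} (hv : ∑ j ∈ F, ‖A j‖ ^ 2 ≤ v) (ht : 0 ≤ t) :
    P {ω | t < ‖∑ j ∈ F, Matrix.toEuclideanLin (A j) (ξ j ω)‖} ≤
      d * ENNReal.ofReal (2 * exp (-(t / d) ^ 2 / (2 * v))) := by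
  refine measure_lt_norm_le_of_forall_measure_le_abs ht fun i => ?_
  have hv0 : 0 ≤ v := (Finset.sum_nonneg fun j _ => sq_nonneg ‖A j‖).trans hv
  have hvar : ∑ j ∈ F, ‖WithLp.toLp 2 (A j i)‖₊ ^ 2 ≤ v.toNNReal := by
    rw [Real.le_toNNReal_iff_coe_le hv0]
    push_cast
    exact le_trans (by gcongr with j; exact Matrix.norm_toLp_row_le_frobenius _ _) hv
  have hsubG := (hasSubgaussianMGF_sum_inner hmeas hindep hlaw
    (fun j => WithLp.toLp 2 (A j i)) F).mono hvar
  have hcoord (ω : Ω) : (∑ j ∈ F, Matrix.toEuclideanLin (A j) (ξ j ω)) i =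
      ∑ j ∈ F, inner ℝ (WithLp.toLp 2 (A j i)) (ξ j ω) := by
    simp only [← Matrix.toEuclideanLin_apply_eq_inner]
    simp
  rw [← ofReal_measureReal]
  refine ENNReal.ofReal_le_ofReal ?_
  simp_rw [hcoord]
  simpa [Real.coe_toNNReal _ hv0] using
    hsubG.measureReal_abs_ge_le (div_nonneg ht d.cast_nonneg)

lemma measure_lt_norm_le_of_hasSum [Countable ι] (hmeas : ∀ j, Measurable (ξ j))
    (hindep : iIndepFun ξ P) (hlaw : ∀ j, P.map (ξ j) = _root_.stdGaussian d)
    (A : ι → Matrix (Fin d) (Fin d) ℝ) {Y : Ω → EuclideanSpace ℝ (Fin d)}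
    (hY : ∀ᵐ ω ∂P, HasSum (fun j => Matrix.toEuclideanLin (A j) (ξ j ω)) (Y ω)) {v t : ℝ}
    (hv : ∀ F : Finset ι, ∑ j ∈ F, ‖A j‖ ^ 2 ≤ v) (ht : 0 ≤ t) :
    P {ω | t < ‖Y ω‖} ≤ d * ENNReal.ofReal (2 * exp (-(t / d) ^ 2 / (2 * v))) := by
  obtain ⟨u, hu⟩ := (atTop : Filter (Finset ι)).exists_seq_tendsto
  refine measure_lt_le_of_ae_tendsto ?_ fun N =>
    measure_lt_norm_sum_le hmeas hindep hlaw A (u N) (hv (u N)) ht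
  filter_upwards [hY] with ω hω
  exact (hω.comp hu).norm

end GaussianSeries

lemma sum_sq_norm_le_of_norm_le_rpow {E : Type*} [SeminormedAddCommGroup E] {a : ℤ → E}
    {c ε b : ℝ} (hε : 0 < ε) (hc : ∀ k : ℤ, k ≠ 0 → ‖a k‖ ≤ c * |(k : ℝ)| ^ (-(1.5 + ε)))
    (hb : 0 < b) (G : Finset ℤ) (hG : ∀ k ∈ G, b ≤ |(k : ℝ)|) :
    ∑ k ∈ G, ‖a k‖ ^ 2 ≤ c ^ 2 * (∑' k : ℤ, |(k : ℝ)| ^ (-(1 + ε))) * b ^ (-(2 + ε)) := by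
  have hterm : ∀ k ∈ G, ‖a k‖ ^ 2 ≤ c ^ 2 * b ^ (-(2 + ε)) * |(k : ℝ)| ^ (-(1 + ε)) := by
    intro k hk
    have hk_pos : 0 < |(k : ℝ)| := hb.trans_le (hG k hk)
    have hk_ne : k ≠ 0 := by rintro rfl; simp at hk_pos
    calc ‖a k‖ ^ 2 ≤ (c * |(k : ℝ)| ^ (-(1.5 + ε))) ^ 2 :=
          pow_le_pow_left₀ (norm_nonneg _) (hc k hk_ne) 2
      _ = c ^ 2 * |(k : ℝ)| ^ (-(2 + ε)) * |(k : ℝ)| ^ (-(1 + ε)) := by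
          rw [mul_pow, mul_assoc, ← rpow_add hk_pos, ← rpow_natCast (_ ^ _), ← rpow_mul hk_pos.le]
          congr 2
          ring
      _ ≤ c ^ 2 * b ^ (-(2 + ε)) * |(k : ℝ)| ^ (-(1 + ε)) := by
          have hanti := rpow_le_rpow_of_nonpos hb (hG k hk) (by linarith : -(2 + ε) ≤ 0)
          gcongr
  calc ∑ k ∈ G, ‖a k‖ ^ 2 ≤ ∑ k ∈ G, c ^ 2 * b ^ (-(2 + ε)) * |(k : ℝ)| ^ (-(1 + ε)) :=
        Finset.sum_le_sum hterm
    _ = c ^ 2 * b ^ (-(2 + ε)) * ∑ k ∈ G, |(k : ℝ)| ^ (-(1 + ε)) := by rw [Finset.mul_sum]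
    _ ≤ c ^ 2 * b ^ (-(2 + ε)) * ∑' k : ℤ, |(k : ℝ)| ^ (-(1 + ε)) := by
        gcongr
        exact (summable_abs_int_rpow (by linarith)).sum_le_tsum _ fun _ _ => by positivity
    _ = _ := by ring

lemma summable_exp_neg_rpow_div {α C : ℝ} (hα : 0 < α) (hC : 0 < C) :
    Summable fun n : ℕ => exp (-(n : ℝ) ^ α / C) := by
  have hpow : Tendsto (fun n : ℕ => (n : ℝ) ^ α) atTop atTop :=
    (tendsto_rpow_atTop hα).comp tendsto_natCast_atTop_atTop
  have ho := (isLittleO_exp_neg_mul_rpow_atTop (inv_pos.2 hC) (-2 / α)).comp_tendsto hpow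
  refine summable_of_isBigO_nat (summable_nat_rpow.2 (by norm_num : (-2 : ℝ) < -1)) ?_
  refine ho.isBigO.congr (fun n => ?_) (fun n => ?_)
  · simp only [Function.comp_apply]
    congr 1
    ring
  · simp only [Function.comp_apply]
    rw [← rpow_mul n.cast_nonneg]
    field_simp

lemma ae_exists_forall_mul_le_of_tsum_ne_top {Ω : Type*} [MeasurableSpace Ω] {P : Measure Ω}
    {w : ℕ → ℝ} {Z : ℕ → Ω → ℝ} (h : ∑' n, P {ω | 1 < w n * Z n ω} ≠ ∞) :
    ∀ᵐ ω ∂P, ∃ M, ∀ n, w n * Z n ω ≤ M := by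
  filter_upwards [ae_eventually_notMem h] with ω hω
  have hbdd : BddAbove (Set.range fun n => w n * Z n ω) :=
    (isBoundedUnder_of_eventually_le (hω.mono fun n hn => not_lt.1 hn)).bddAbove_range
  obtain ⟨M, hM⟩ := hbdd
  exact ⟨M, fun n => hM ⟨n, rfl⟩⟩

section MovingAverage

variable {d : ℕ} {Ω : Type*} [MeasurableSpace Ω] {P : Measure Ω} [IsFiniteMeasure P]
  {a : ℤ → Matrix (Fin d) (Fin d) ℝ} {ξ : ℤ → Ω → EuclideanSpace ℝ (Fin d)} {c ε : ℝ}

lemma exists_summable_tail_bound (hmeas : ∀ j, Measurable (ξ j)) (hindep : iIndepFun ξ P)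
    (hlaw : ∀ j, P.map (ξ j) = _root_.stdGaussian d) (hε : 0 < ε)
    (hc : ∀ k : ℤ, k ≠ 0 → ‖a k‖ ≤ c * |(k : ℝ)| ^ (-(1.5 + ε))) :
    ∃ D : ℕ → ℝ≥0∞, ∑' m, D m ≠ ∞ ∧
      ∀ (p : ℤ → Prop) (n : ℤ) (Y : Ω → EuclideanSpace ℝ (Fin d)),
        (∀ᵐ ω ∂P, HasSum (fun j : {j : ℤ // p j} =>
          Matrix.toEuclideanLin (a (j - n)) (ξ j ω)) (Y ω)) →
        ∀ m : ℕ, 0 < m → (∀ j, p j → (m : ℝ) ≤ |((j - n : ℤ) : ℝ)|) →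
        P {ω | 1 < (m : ℝ) ^ (1 + ε / 4) * ‖Y ω‖} ≤ D m := by
  set K := c ^ 2 * (∑' k : ℤ, |(k : ℝ)| ^ (-(1 + ε))) + 1
  have hK : 0 < K := by positivity
  refine ⟨fun m => d * ENNReal.ofReal (2 * exp (-(m : ℝ) ^ (ε / 2) / (2 * d ^ 2 * K))), ?_,
    fun p n Y hY m hm hpm => ?_⟩
  · rw [ENNReal.tsum_mul_left]
    rcases eq_or_ne d 0 with rfl | hd
    · simp
    refine ENNReal.mul_ne_top (by simp) ?_
    rw [← ENNReal.ofReal_tsum_of_nonneg (fun m => by positivity)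
      ((summable_exp_neg_rpow_div (by positivity) (by positivity)).mul_left 2)]
    exact ENNReal.ofReal_ne_top
  have hb : (0 : ℝ) < m := by exact_mod_cast hm
  have hevent : {ω | 1 < (m : ℝ) ^ (1 + ε / 4) * ‖Y ω‖} =
      {ω | (m : ℝ) ^ (-(1 + ε / 4)) < ‖Y ω‖} := by
    ext ω
    simp only [Set.mem_ofPred_eq, rpow_neg hb.le, inv_lt_iff_one_lt_mul₀ (rpow_pos_of_pos hb _),
      mul_comm ‖Y ω‖]
  have hv (F : Finset {j : ℤ // p j}) : ∑ j ∈ F, ‖a (j - n)‖ ^ 2 ≤ K * (m : ℝ) ^ (-(2 + ε)) := by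
    have hshift := sum_sq_norm_le_of_norm_le_rpow hε hc hb
      (F.map ⟨fun j : {j : ℤ // p j} => (j : ℤ) - n, fun j j' h => Subtype.ext (sub_left_inj.1 h)⟩)
      fun k hk => by obtain ⟨⟨j, hj⟩, -, rfl⟩ := Finset.mem_map.1 hk; exact hpm j hj
    rw [Finset.sum_map] at hshift
    exact hshift.trans (mul_le_mul_of_nonneg_right (by linarith) (by positivity))
  have hexp : ((m : ℝ) ^ (-(1 + ε / 4)) / d) ^ 2 / (2 * (K * (m : ℝ) ^ (-(2 + ε)))) =
      (m : ℝ) ^ (ε / 2) / (2 * d ^ 2 * K) := by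
    have hpow : ((m : ℝ) ^ (-(1 + ε / 4))) ^ 2 / (2 * (K * (m : ℝ) ^ (-(2 + ε)))) =
        (m : ℝ) ^ (ε / 2) / (2 * K) := by
      have hsplit : ((m : ℝ) ^ (-(1 + ε / 4))) ^ 2 = (m : ℝ) ^ (ε / 2) * (m : ℝ) ^ (-(2 + ε)) := by
        rw [← rpow_natCast, ← rpow_mul hb.le, ← rpow_add hb]
        ring_nf
      rw [hsplit, div_eq_div_iff (by positivity) (by positivity)]
      ring
    calc ((m : ℝ) ^ (-(1 + ε / 4)) / d) ^ 2 / (2 * (K * (m : ℝ) ^ (-(2 + ε))))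
        = ((m : ℝ) ^ (-(1 + ε / 4))) ^ 2 / (2 * (K * (m : ℝ) ^ (-(2 + ε)))) / d ^ 2 := by ring
      _ = (m : ℝ) ^ (ε / 2) / (2 * d ^ 2 * K) := by rw [hpow, div_div, mul_right_comm]
  dsimp only
  rw [hevent, neg_div, ← hexp, ← neg_div]
  exact measure_lt_norm_le_of_hasSum (ξ := fun j : {j : ℤ // p j} => ξ j) (fun j => hmeas j)
    (hindep.precomp Subtype.val_injective) (fun j => hlaw j) (fun j => a (j - n)) hY hv
    (by positivity)

end MovingAverage

theorem discrete_past_future_decay_general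
    (d : ℕ) {Ω : Type*} [MeasurableSpace Ω] (P : Measure Ω) [IsProbabilityMeasure P]
    (a : ℤ → Matrix (Fin d) (Fin d) ℝ) (ξ : ℤ → Ω → EuclideanSpace ℝ (Fin d))
    (hmeas : ∀ j, Measurable (ξ j))
    (hindep : iIndepFun ξ P)
    (hdist : ∀ j, P.map (ξ j) = stdGaussian d)
    (hdecay : ∃ ε > (0:ℝ), ∃ c : ℝ, ∀ j : ℤ, j ≠ 0 → ‖a j‖ ≤ c * |(j:ℝ)| ^ (-(1.5 + ε)))
    (Xpast Xfut : ℤ → Ω → EuclideanSpace ℝ (Fin d))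
    (hpast : ∀ n : ℤ, ∀ᵐ ω ∂P, HasSum
      (fun j : {j : ℤ // j ≤ 0} => Matrix.toEuclideanLin (a ((j : ℤ) - n)) (ξ (j : ℤ) ω))
      (Xpast n ω))
    (hfut : ∀ n : ℤ, ∀ᵐ ω ∂P, HasSum
      (fun j : {j : ℤ // 0 < j} => Matrix.toEuclideanLin (a ((j : ℤ) - n)) (ξ (j : ℤ) ω))
      (Xfut n ω)) :
    ∃ ε > (0:ℝ), ∀ᵐ ω ∂P,
      (∃ M : ℝ, ∀ n : ℕ, ((n : ℝ) + 1) ^ (1 + ε) * ‖Xfut (-(n : ℤ)) ω‖ ≤ M) ∧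
      (∃ M : ℝ, ∀ n : ℕ, 0 < n → (n : ℝ) ^ (1 + ε) * ‖Xpast (n : ℤ) ω‖ ≤ M) := by
  obtain ⟨ε, hε, c, hc⟩ := hdecay
  obtain ⟨D, hD, htail⟩ := exists_summable_tail_bound hmeas hindep hdist hε hc
  have hfutBdd : ∀ᵐ ω ∂P, ∃ M, ∀ n : ℕ, ((n : ℝ) + 1) ^ (1 + ε / 4) * ‖Xfut (-(n : ℤ)) ω‖ ≤ M := by
    refine ae_exists_forall_mul_le_of_tsum_ne_top (ne_top_of_le_ne_top hD ?_)
    refine (ENNReal.tsum_le_tsum fun n => ?_).trans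
      (ENNReal.tsum_comp_le_tsum_of_injective Nat.succ_injective D)
    have := htail (0 < ·) (-n) (Xfut (-n)) (hfut (-n)) (n + 1) n.succ_pos fun j hj =>
      le_abs.2 (Or.inl (by exact_mod_cast (by omega : ((n + 1 : ℕ) : ℤ) ≤ j - -n)))
    simpa using this
  have hpastBdd : ∀ᵐ ω ∂P, ∃ M, ∀ n : ℕ, (n : ℝ) ^ (1 + ε / 4) * ‖Xpast n ω‖ ≤ M := by
    refine ae_exists_forall_mul_le_of_tsum_ne_top (ne_top_of_le_ne_top hD
      (ENNReal.tsum_le_tsum fun n => ?_))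
    rcases n.eq_zero_or_pos with rfl | hn
    · norm_num [zero_rpow (by positivity : 1 + ε / 4 ≠ 0)]
    exact htail (· ≤ 0) n (Xpast n) (hpast n) n hn fun j hj =>
      le_abs.2 (Or.inr (by exact_mod_cast (by omega : (n : ℤ) ≤ -(j - n))))
  refine ⟨ε / 4, by positivity, ?_⟩
  filter_upwards [hfutBdd, hpastBdd] with ω hf hp
  exact ⟨hf, hp.imp fun M hM n _ => hM n⟩

/-- Lemma 4.1: splitting the discrete-time moving average process
`X_n = X_n^past + X_n^future`, with `X_n^past = ∑_{j ≤ 0} a_{j-n} ξ_j` and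
`X_n^future = ∑_{j > 0} a_{j-n} ξ_j`, there exists `ε > 0` such that almost surely
`sup_{n ≥ 0} (n+1)^{1+ε} |X_{-n}^future| < ∞` and `sup_{n > 0} n^{1+ε} |X_n^past| < ∞`. -/
theorem discrete_past_future_decay
    (d : ℕ) {Ω : Type*} [MeasurableSpace Ω] (P : Measure Ω) [IsProbabilityMeasure P]
    (a : ℤ → Matrix (Fin d) (Fin d) ℝ) (ξ : ℤ → Ω → EuclideanSpace ℝ (Fin d))
    (hmeas : ∀ j, Measurable (ξ j))
    (hindep : iIndepFun ξ P)
    (hdist : ∀ j, P.map (ξ j) = stdGaussian d)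
    (hunit : HasSum (fun j : ℤ => a j * (a j).transpose) 1)
    (hdecay : ∃ ε > (0:ℝ), ∃ c : ℝ, ∀ j : ℤ, j ≠ 0 → ‖a j‖ ≤ c * |(j:ℝ)| ^ (-(1.5 + ε)))
    (Xpast Xfut : ℤ → Ω → EuclideanSpace ℝ (Fin d))
    (hpast : ∀ n : ℤ, ∀ᵐ ω ∂P, HasSum
      (fun j : {j : ℤ // j ≤ 0} => Matrix.toEuclideanLin (a ((j : ℤ) - n)) (ξ (j : ℤ) ω))
      (Xpast n ω))
    (hfut : ∀ n : ℤ, ∀ᵐ ω ∂P, HasSum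
      (fun j : {j : ℤ // 0 < j} => Matrix.toEuclideanLin (a ((j : ℤ) - n)) (ξ (j : ℤ) ω))
      (Xfut n ω)) :
    ∃ ε > (0:ℝ), ∀ᵐ ω ∂P,
      (∃ M : ℝ, ∀ n : ℕ, ((n : ℝ) + 1) ^ (1 + ε) * ‖Xfut (-(n : ℤ)) ω‖ ≤ M) ∧
      (∃ M : ℝ, ∀ n : ℕ, 0 < n → (n : ℝ) ^ (1 + ε) * ‖Xpast (n : ℤ) ω‖ ≤ M) :=
  discrete_past_future_decay_general d P a ξ hmeas hindep hdist hdecay Xpast Xfut hpast hfut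
end

section
/- Let φ : [0,∞) → ℝ, ε > 0 and α ∈ (0,1] be such that sup_{x≥0} (1+x)^{0.5+ε}|φ(x)| < ∞ and sup_{x≥0, 0<δ<1} |(1+x+δ)^{0.5+ε} φ(x+δ) − (1+x)^{0.5+ε} φ(x)|/δ^α < ∞. Then there exists C < ∞ such that for all y ∈ [0,∞) and δ ∈ [0,1], ∫_0^∞ |(1+y+δ)^ε φ(y+δ+x) − (1+y)^ε φ(y+x)|² dx ≤ C δ^{2α}. -/
/-!
Write `φ t = (1 + t) ^ (-p) * ψ t` with `p = 1/2 + ε`, where `ψ` is bounded and `α`-Hölder.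
With the weight `k y x = (1 + y) ^ ε * (1 + y + x) ^ (-p)` the integrand is
`k (y + δ) x * ψ (y + x + δ) - k y x * ψ (y + x)`. The mean value theorem for `t ↦ t ^ q`
gives `k (y + δ) x ≤ 2 ^ ε * k y x` and `|k (y + δ) x - k y x| = O(δ * k y x)`, so the
integrand is `O(δ ^ α * k y x)`, while `∫₀^∞ (k y x)² dx = 1 / (2ε)` does not depend on `y`.
-/

open MeasureTheory Set

theorem abs_rpow_sub_rpow_le {a b q : ℝ} (ha : 0 < a) (hab : a ≤ b) :
    |b ^ q - a ^ q| ≤ |q| * max (a ^ (q - 1)) (b ^ (q - 1)) * (b - a) := by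
  have hderiv : ∀ t ∈ Icc a b, HasDerivWithinAt (· ^ q) (q * t ^ (q - 1)) (Icc a b) t :=
    fun t ht =>
      (Real.hasDerivAt_rpow_const (Or.inl (ha.trans_le ht.1).ne')).hasDerivWithinAt
  have hbound :
      ∀ t ∈ Icc a b, ‖q * t ^ (q - 1)‖ ≤ |q| * max (a ^ (q - 1)) (b ^ (q - 1)) := by
    intro t ht
    have ht0 : 0 < t := ha.trans_le ht.1
    rw [Real.norm_eq_abs, abs_mul, abs_of_pos (Real.rpow_pos_of_pos ht0 _)]
    gcongr
    rcases le_total 0 (q - 1) with hq | hq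
    · exact le_max_of_le_right (Real.rpow_le_rpow ht0.le ht.2 hq)
    · exact le_max_of_le_left (Real.rpow_le_rpow_of_nonpos ha ht.1 hq)
  simpa only [Real.norm_eq_abs, abs_of_nonneg (sub_nonneg.2 hab)] using
    (convex_Icc a b).norm_image_sub_le_of_norm_hasDerivWithin_le hderiv hbound
      (left_mem_Icc.2 hab) (right_mem_Icc.2 hab)

theorem add_rpow_le_two_rpow_mul_rpow {a δ ε : ℝ} (hδ : 0 ≤ δ) (hδa : δ ≤ a) (hε : 0 ≤ ε) :
    (a + δ) ^ ε ≤ 2 ^ ε * a ^ ε := by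
  rw [← Real.mul_rpow zero_le_two (hδ.trans hδa)]
  exact Real.rpow_le_rpow (by linarith) (by linarith) hε

theorem abs_add_rpow_sub_rpow_le {a δ ε : ℝ} (ha : 1 ≤ a) (hδ : 0 ≤ δ) (hδa : δ ≤ a)
    (hε : 0 ≤ ε) : |(a + δ) ^ ε - a ^ ε| ≤ ε * 2 ^ ε * a ^ ε * δ := by
  have hmax : max (a ^ (ε - 1)) ((a + δ) ^ (ε - 1)) ≤ 2 ^ ε * a ^ ε := by
    have h2 : (1 : ℝ) ≤ 2 ^ ε := Real.one_le_rpow one_le_two hε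
    refine max_le ?_ ?_
    · calc a ^ (ε - 1) ≤ a ^ ε := Real.rpow_le_rpow_of_exponent_le ha (by linarith)
        _ ≤ 2 ^ ε * a ^ ε := le_mul_of_one_le_left (by positivity) h2
    · calc (a + δ) ^ (ε - 1) ≤ (a + δ) ^ ε :=
            Real.rpow_le_rpow_of_exponent_le (by linarith) (by linarith)
        _ ≤ 2 ^ ε * a ^ ε := add_rpow_le_two_rpow_mul_rpow hδ hδa hε
  calc |(a + δ) ^ ε - a ^ ε|
      ≤ |ε| * max (a ^ (ε - 1)) ((a + δ) ^ (ε - 1)) * (a + δ - a) :=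
        abs_rpow_sub_rpow_le (by linarith) (by linarith)
    _ ≤ ε * (2 ^ ε * a ^ ε) * δ := by rw [abs_of_nonneg hε, add_sub_cancel_left]; gcongr
    _ = ε * 2 ^ ε * a ^ ε * δ := by ring

theorem abs_add_rpow_neg_sub_rpow_neg_le {s δ p : ℝ} (hs : 1 ≤ s) (hδ : 0 ≤ δ) (hp : 0 ≤ p) :
    |(s + δ) ^ (-p) - s ^ (-p)| ≤ p * s ^ (-p) * δ := by
  have hs0 : 0 < s := by linarith
  have hmax : max (s ^ (-p - 1)) ((s + δ) ^ (-p - 1)) ≤ s ^ (-p) := by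
    have h : s ^ (-p - 1) ≤ s ^ (-p) := Real.rpow_le_rpow_of_exponent_le hs (by linarith)
    exact max_le h ((Real.rpow_le_rpow_of_nonpos hs0 (by linarith) (by linarith)).trans h)
  calc |(s + δ) ^ (-p) - s ^ (-p)|
      ≤ |-p| * max (s ^ (-p - 1)) ((s + δ) ^ (-p - 1)) * (s + δ - s) :=
        abs_rpow_sub_rpow_le hs0 (by linarith)
    _ ≤ p * s ^ (-p) * δ := by rw [abs_neg, abs_of_nonneg hp, add_sub_cancel_left]; gcongr

theorem abs_rpow_mul_sub_rpow_mul_le {a s δ ε p u v : ℝ} (ha : 1 ≤ a) (has : a ≤ s)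
    (hδ : 0 ≤ δ) (hδa : δ ≤ a) (hε : 0 ≤ ε) (hp : 0 ≤ p) :
    |(a + δ) ^ ε * v - a ^ ε * u|
      ≤ (2 ^ ε * |(s + δ) ^ p * v - s ^ p * u| + (ε * 2 ^ ε + p) * δ * |s ^ p * u|)
        * (a ^ ε * s ^ (-p)) := by
  have hs : 0 < s := by linarith
  have hsδ : 0 < s + δ := by linarith
  set k₀ := a ^ ε * s ^ (-p)
  set k₁ := (a + δ) ^ ε * (s + δ) ^ (-p)
  have hk₀ : 0 ≤ k₀ := by positivity
  have hk₁ : k₁ ≤ 2 ^ ε * k₀ := by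
    calc k₁ ≤ (2 ^ ε * a ^ ε) * s ^ (-p) :=
          mul_le_mul (add_rpow_le_two_rpow_mul_rpow hδ hδa hε)
            (Real.rpow_le_rpow_of_nonpos hs (by linarith) (by linarith)) (by positivity)
            (by positivity)
      _ = 2 ^ ε * k₀ := by ring
  have hk₁₀ : |k₁ - k₀| ≤ (ε * 2 ^ ε + p) * δ * k₀ := by
    have hsplit : k₁ - k₀ = ((a + δ) ^ ε - a ^ ε) * (s + δ) ^ (-p)
        + a ^ ε * ((s + δ) ^ (-p) - s ^ (-p)) := by ring
    calc |k₁ - k₀| ≤ |(a + δ) ^ ε - a ^ ε| * (s + δ) ^ (-p)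
          + a ^ ε * |(s + δ) ^ (-p) - s ^ (-p)| := by
          rw [hsplit]
          refine (abs_add_le _ _).trans_eq ?_
          rw [abs_mul, abs_mul, abs_of_pos (by positivity : 0 < (s + δ) ^ (-p)),
            abs_of_pos (by positivity : (0 : ℝ) < a ^ ε)]
      _ ≤ (ε * 2 ^ ε * a ^ ε * δ) * s ^ (-p) + a ^ ε * (p * s ^ (-p) * δ) := by
          gcongr ?_ * ?_ + _ * ?_
          · exact abs_add_rpow_sub_rpow_le ha hδ hδa hε
          · exact Real.rpow_le_rpow_of_nonpos hs (by linarith) (by linarith)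
          · exact abs_add_rpow_neg_sub_rpow_neg_le (ha.trans has) hδ hp
      _ = (ε * 2 ^ ε + p) * δ * k₀ := by ring
  have hcancel : ∀ t : ℝ, 0 < t → t ^ (-p) * t ^ p = 1 := fun t ht => by
    rw [← Real.rpow_add ht, neg_add_cancel, Real.rpow_zero]
  have hdecomp : (a + δ) ^ ε * v - a ^ ε * u
      = k₁ * ((s + δ) ^ p * v - s ^ p * u) + (k₁ - k₀) * (s ^ p * u) := by
    linear_combination (-(a + δ) ^ ε * v) * hcancel _ hsδ + (a ^ ε * u) * hcancel _ hs
  calc |(a + δ) ^ ε * v - a ^ ε * u|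
      ≤ k₁ * |(s + δ) ^ p * v - s ^ p * u| + |k₁ - k₀| * |s ^ p * u| := by
        rw [hdecomp]
        refine (abs_add_le _ _).trans_eq ?_
        rw [abs_mul k₁, abs_mul (k₁ - k₀), abs_of_nonneg (by positivity : 0 ≤ k₁)]
    _ ≤ 2 ^ ε * k₀ * |(s + δ) ^ p * v - s ^ p * u|
          + (ε * 2 ^ ε + p) * δ * k₀ * |s ^ p * u| := by
        gcongr
    _ = _ := by ring

theorem lintegral_Ioi_add_rpow {u r : ℝ} (hu : 0 < u) (hr : r < -1) :
    ∫⁻ x in Ioi 0, ENNReal.ofReal ((u + x) ^ r) = ENNReal.ofReal (-u ^ (r + 1) / (r + 1)) := by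
  have hshift : ∫⁻ x in Ioi 0, ENNReal.ofReal ((u + x) ^ r)
      = ∫⁻ x in Ioi u, ENNReal.ofReal (x ^ r) := by
    have hpre : (· + u) ⁻¹' Ioi u = Ioi (0 : ℝ) := by ext x; simp
    rw [← hpre, ← (measurePreserving_add_right volume u).setLIntegral_comp_preimage_emb
      (MeasurableEquiv.addRight u).measurableEmbedding (fun x => ENNReal.ofReal (x ^ r))]
    simp only [add_comm u]
  rw [hshift, ← ofReal_integral_eq_lintegral_ofReal (integrableOn_Ioi_rpow_of_lt hr hu),
    integral_Ioi_rpow_of_lt hr hu]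
  filter_upwards [ae_restrict_mem measurableSet_Ioi] with x hx
  exact Real.rpow_nonneg (hu.trans hx).le r

theorem lintegral_sq_le_of_abs_le_rpow_mul_rpow {f : ℝ → ℝ} {a ε K : ℝ} (ha : 0 < a)
    (hε : 0 < ε) (hf : ∀ x, 0 < x → |f x| ≤ K * (a ^ ε * (a + x) ^ (-(1 / 2 + ε)))) :
    ∫⁻ x in Ioi 0, ENNReal.ofReal (f x ^ 2) ≤ ENNReal.ofReal (K ^ 2 / (2 * ε)) := by
  have hsq : ∀ x, 0 < x → f x ^ 2 ≤ (K * a ^ ε) ^ 2 * (a + x) ^ (-(2 * ε) - 1) := by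
    intro x hx
    have hax : 0 < a + x := by linarith
    calc f x ^ 2 = |f x| ^ 2 := (sq_abs _).symm
      _ ≤ (K * (a ^ ε * (a + x) ^ (-(1 / 2 + ε)))) ^ 2 :=
          pow_le_pow_left₀ (abs_nonneg _) (hf x hx) 2
      _ = (K * a ^ ε) ^ 2 * ((a + x) ^ (-(1 / 2 + ε))) ^ 2 := by ring
      _ = (K * a ^ ε) ^ 2 * (a + x) ^ (-(2 * ε) - 1) := by
          rw [← Real.rpow_mul_natCast hax.le]
          congr 2
          push_cast
          ring
  have hpow : ((a ^ ε) ^ 2 * a ^ (-(2 * ε))) = 1 := by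
    rw [← Real.rpow_mul_natCast ha.le, ← Real.rpow_add ha, Nat.cast_ofNat,
      show ε * 2 + -(2 * ε) = 0 by ring, Real.rpow_zero]
  calc ∫⁻ x in Ioi 0, ENNReal.ofReal (f x ^ 2)
      ≤ ∫⁻ x in Ioi 0, ENNReal.ofReal ((K * a ^ ε) ^ 2) *
          ENNReal.ofReal ((a + x) ^ (-(2 * ε) - 1)) := by
        refine setLIntegral_mono' measurableSet_Ioi fun x hx => ?_
        rw [← ENNReal.ofReal_mul (sq_nonneg _)]
        exact ENNReal.ofReal_le_ofReal (hsq x hx)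
    _ = ENNReal.ofReal ((K * a ^ ε) ^ 2 * (a ^ (-(2 * ε)) / (2 * ε))) := by
        rw [lintegral_const_mul' _ _ ENNReal.ofReal_ne_top,
          lintegral_Ioi_add_rpow ha (by linarith), ← ENNReal.ofReal_mul (sq_nonneg _),
          show -(2 * ε) - 1 + 1 = -(2 * ε) by ring, neg_div_neg_eq]
    _ = ENNReal.ofReal (K ^ 2 / (2 * ε)) := by
        congr 1
        linear_combination (K ^ 2 / (2 * ε)) * hpow

theorem abs_sub_le_mul_rpow_of_bdd {ψ : ℝ → ℝ} {α c₁ c₂ : ℝ}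
    (hbdd : ∀ x, 0 ≤ x → |ψ x| ≤ c₁)
    (hholder : ∀ x δ, 0 ≤ x → 0 < δ → δ < 1 → |ψ (x + δ) - ψ x| ≤ c₂ * δ ^ α)
    {x δ : ℝ} (hx : 0 ≤ x) (hδ : 0 < δ) (hδ1 : δ ≤ 1) :
    |ψ (x + δ) - ψ x| ≤ (c₂ + 2 * c₁) * δ ^ α := by
  have hc₁ : 0 ≤ c₁ := (abs_nonneg _).trans (hbdd 0 le_rfl)
  have hc₂ : 0 ≤ c₂ := by
    have h := (abs_nonneg _).trans (hholder 0 (1 / 2) le_rfl (by norm_num) (by norm_num))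
    exact nonneg_of_mul_nonneg_left h (by positivity)
  rcases hδ1.lt_or_eq with hδ1 | rfl
  · calc |ψ (x + δ) - ψ x| ≤ c₂ * δ ^ α := hholder x δ hx hδ hδ1
      _ ≤ (c₂ + 2 * c₁) * δ ^ α := by gcongr; linarith
  · calc |ψ (x + 1) - ψ x| ≤ |ψ (x + 1)| + |ψ x| := abs_sub _ _
      _ ≤ c₁ + c₁ := add_le_add (hbdd _ (by linarith)) (hbdd x hx)
      _ ≤ (c₂ + 2 * c₁) * 1 ^ α := by
        rw [Real.one_rpow]
        linarith

theorem abs_rpow_mul_sub_rpow_mul_le_of_holder {a s δ ε p α c₁ c₂ u v : ℝ} (ha : 1 ≤ a)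
    (has : a ≤ s) (hδ : 0 ≤ δ) (hδ1 : δ ≤ 1) (hε : 0 ≤ ε) (hp : 0 ≤ p) (hα1 : α ≤ 1)
    (hbdd : |s ^ p * u| ≤ c₁) (hholder : |(s + δ) ^ p * v - s ^ p * u| ≤ c₂ * δ ^ α) :
    |(a + δ) ^ ε * v - a ^ ε * u|
      ≤ (2 ^ ε * c₂ + (ε * 2 ^ ε + p) * c₁) * δ ^ α * (a ^ ε * s ^ (-p)) := by
  have hc₁ : 0 ≤ c₁ := (abs_nonneg _).trans hbdd
  have hδα : δ ≤ δ ^ α := Real.self_le_rpow_of_le_one hδ hδ1 hα1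
  calc _ ≤ (2 ^ ε * |(s + δ) ^ p * v - s ^ p * u| + (ε * 2 ^ ε + p) * δ * |s ^ p * u|)
        * (a ^ ε * s ^ (-p)) :=
        abs_rpow_mul_sub_rpow_mul_le ha has hδ (by linarith) hε hp
    _ ≤ (2 ^ ε * (c₂ * δ ^ α) + (ε * 2 ^ ε + p) * δ ^ α * c₁) * (a ^ ε * s ^ (-p)) := by
        have : 0 ≤ s ^ (-p) := Real.rpow_nonneg (by linarith) _
        gcongr
    _ = _ := by ring

theorem l2_holder_shift_bound_general (φ : ℝ → ℝ) (ε α : ℝ) (hε : 0 < ε)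
    (hα1 : α ≤ 1)
    (hbdd : ∃ c : ℝ, ∀ x : ℝ, 0 ≤ x → (1 + x) ^ ((0.5:ℝ) + ε) * |φ x| ≤ c)
    (hholder : ∃ c : ℝ, ∀ x δ : ℝ, 0 ≤ x → 0 < δ → δ < 1 →
      |(1 + x + δ) ^ ((0.5:ℝ) + ε) * φ (x + δ) - (1 + x) ^ ((0.5:ℝ) + ε) * φ x|
        ≤ c * δ ^ α) :
    ∃ C : ℝ, ∀ y δ : ℝ, 0 ≤ y → 0 ≤ δ → δ ≤ 1 →
      ∫⁻ x in Set.Ioi (0:ℝ), ENNReal.ofReal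
          (((1 + y + δ) ^ ε * φ (y + δ + x) - (1 + y) ^ ε * φ (y + x)) ^ 2)
        ≤ ENNReal.ofReal (C * δ ^ (2 * α)) := by
  obtain ⟨c₁, hφ_bdd⟩ := hbdd
  obtain ⟨c₂, hφ_holder⟩ := hholder
  rw [show (0.5 : ℝ) = 1 / 2 by norm_num] at hφ_bdd hφ_holder
  set p : ℝ := 1 / 2 + ε
  set ψ : ℝ → ℝ := fun t => (1 + t) ^ p * φ t
  have hψ : ∀ x, 0 ≤ x → |ψ x| ≤ c₁ := fun x hx => by
    rw [abs_mul, abs_of_pos (Real.rpow_pos_of_pos (by linarith) _)]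
    exact hφ_bdd x hx
  have hψ_holder : ∀ x δ, 0 ≤ x → 0 < δ → δ < 1 → |ψ (x + δ) - ψ x| ≤ c₂ * δ ^ α :=
    fun x δ hx hδ hδ1 => by simpa only [ψ, add_assoc] using hφ_holder x δ hx hδ hδ1
  set M := 2 ^ ε * (c₂ + 2 * c₁) + (ε * 2 ^ ε + p) * c₁
  refine ⟨M ^ 2 / (2 * ε), fun y δ hy hδ hδ1 => ?_⟩
  rcases hδ.eq_or_lt with rfl | hδ_pos
  · simp
  refine (lintegral_sq_le_of_abs_le_rpow_mul_rpow (a := 1 + y) (K := M * δ ^ α)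
    (by linarith) hε fun x hx => ?_).trans_eq ?_
  · refine abs_rpow_mul_sub_rpow_mul_le_of_holder (s := 1 + y + x) (by linarith) (by linarith)
      hδ hδ1 hε.le (by positivity) hα1 ?_ ?_
    · simpa only [ψ, add_assoc] using hψ (y + x) (by linarith)
    · convert abs_sub_le_mul_rpow_of_bdd hψ hψ_holder (x := y + x) (by linarith) hδ_pos hδ1
        using 4 <;> ring_nf
  · rw [mul_pow, ← Real.rpow_mul_natCast hδ, Nat.cast_ofNat, mul_comm α,
      mul_div_right_comm]

/-- Lemma 4.3: if `x ↦ (1+x)^{0.5+ε} φ(x)` is bounded and `α`-Hölder continuous on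
`[0, ∞)`, then there is `C < ∞` such that for all `y ≥ 0` and `δ ∈ [0, 1]`,
`∫_0^∞ |(1+y+δ)^ε φ(y+δ+x) - (1+y)^ε φ(y+x)|² dx ≤ C δ^{2α}`. -/
theorem l2_holder_shift_bound (φ : ℝ → ℝ) (ε α : ℝ) (hε : 0 < ε)
    (hα0 : 0 < α) (hα1 : α ≤ 1)
    (hbdd : ∃ c : ℝ, ∀ x : ℝ, 0 ≤ x → (1 + x) ^ ((0.5:ℝ) + ε) * |φ x| ≤ c)
    (hholder : ∃ c : ℝ, ∀ x δ : ℝ, 0 ≤ x → 0 < δ → δ < 1 →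
      |(1 + x + δ) ^ ((0.5:ℝ) + ε) * φ (x + δ) - (1 + x) ^ ((0.5:ℝ) + ε) * φ x|
        ≤ c * δ ^ α) :
    ∃ C : ℝ, ∀ y δ : ℝ, 0 ≤ y → 0 ≤ δ → δ ≤ 1 →
      ∫⁻ x in Set.Ioi (0:ℝ), ENNReal.ofReal
          (((1 + y + δ) ^ ε * φ (y + δ + x) - (1 + y) ^ ε * φ (y + x)) ^ 2)
        ≤ ENNReal.ofReal (C * δ ^ (2 * α)) :=
  l2_holder_shift_bound_general φ ε α hε hα1 hbdd hholder
end

section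
/- Let numbers a_1, a_2, … ∈ [0,∞) and ε > 0 satisfy a_{m+n} ≤ √(a_m² + a_n²) + ε for all m, n ∈ {1,2,…}. Then a_n ≤ (a_1 + (√2/(√2−1)) ε) √n for all n. -/
/-!
Put `D = ε / (√2 - 1)` and `C = a₁ + D`. Doubling multiplies the deficit `D` by `√2`, and the
gain `(√2 - 1) D = ε` pays for the additive error, so `a (2 ^ k) ≤ C √(2 ^ k) - D`. Splitting
`n = 2 ^ k + r` with `r < 2 ^ k`, the inequality `|(u - D, v - D)| ≤ |(u, v)| - D` in the
Euclidean plane keeps the deficit, so each split costs only one `ε` and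
`a n ≤ C √n - D + ε log₂ n`. Finally `log₂ n ≤ √n + 1` and `ε ≤ D`.
-/

theorem Nat.sq_le_two_pow_succ (k : ℕ) : k ^ 2 ≤ 2 ^ (k + 1) := by
  induction k with
  | zero => norm_num
  | succ k ih =>
    have := Nat.lt_two_pow_self (n := k)
    rw [pow_succ 2 k] at ih
    rw [pow_succ 2 (k + 1), pow_succ 2 k]
    nlinarith

theorem Nat.log_two_le_sqrt_add_one (n : ℕ) : Nat.log 2 n ≤ Nat.sqrt n + 1 := by
  cases hj : Nat.log 2 n with
  | zero => omega
  | succ j =>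
    have hn : n ≠ 0 := fun h0 => by simp [h0] at hj
    have hjn : j * j ≤ n := by
      calc j * j = j ^ 2 := (sq j).symm
        _ ≤ 2 ^ (j + 1) := Nat.sq_le_two_pow_succ j
        _ ≤ n := hj ▸ Nat.pow_log_le_self 2 hn
    have := Nat.le_sqrt.2 hjn
    omega

theorem Real.sqrt_sq_add_sq_add_le (x y : ℝ) {q : ℝ} (hq : 0 ≤ q) :
    √(x ^ 2 + (y + q) ^ 2) ≤ √(x ^ 2 + y ^ 2) + q := by
  have hy : y ≤ √(x ^ 2 + y ^ 2) := Real.le_sqrt_of_sq_le (by nlinarith)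
  have hw := Real.sq_sqrt (add_nonneg (sq_nonneg x) (sq_nonneg y))
  rw [Real.sqrt_le_left (by positivity)]
  nlinarith

theorem Real.sqrt_sub_sq_add_sub_sq_le {u v p : ℝ} (hp : 0 ≤ p) (hu : p ≤ u) (hv : p ≤ v) :
    √((u - p) ^ 2 + (v - p) ^ 2) ≤ √(u ^ 2 + v ^ 2) - p := by
  set w := √(u ^ 2 + v ^ 2)
  have hw : w ^ 2 = u ^ 2 + v ^ 2 := Real.sq_sqrt (by positivity)
  have hwu : u ≤ w := Real.le_sqrt_of_sq_le (by nlinarith)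
  have hw_le : w ≤ u + v - p / 2 := by
    nlinarith [mul_nonneg (sub_nonneg.2 hu) (hp.trans hv),
      mul_nonneg (sub_nonneg.2 hv) (hp.trans hu)]
  rw [Real.sqrt_le_left (by linarith)]
  nlinarith

section

variable {a : ℕ → ℝ} {ε C D : ℝ}

theorem le_mul_sqrt_two_pow_sub (ha : ∀ n, 1 ≤ n → 0 ≤ a n)
    (h : ∀ m n, 1 ≤ m → 1 ≤ n → a (m + n) ≤ √(a m ^ 2 + a n ^ 2) + ε)
    (hD : ε ≤ (√2 - 1) * D) (h1 : a 1 ≤ C - D) (k : ℕ) :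
    a (2 ^ k) ≤ C * √(2 ^ k : ℕ) - D := by
  induction k with
  | zero => simpa using h1
  | succ k ih =>
    have hm : 1 ≤ 2 ^ k := Nat.one_le_two_pow
    have hdouble : √(a (2 ^ k) ^ 2 + a (2 ^ k) ^ 2) = √2 * a (2 ^ k) := by
      rw [← two_mul, Real.sqrt_mul zero_le_two, Real.sqrt_sq (ha _ hm)]
    have hsqrt : √((2 ^ (k + 1) : ℕ) : ℝ) = √2 * √(2 ^ k : ℕ) := by
      rw [← Real.sqrt_mul zero_le_two]; push_cast; ring_nf
    calc a (2 ^ (k + 1)) = a (2 ^ k + 2 ^ k) := by rw [pow_succ, mul_two]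
      _ ≤ √2 * a (2 ^ k) + ε := hdouble ▸ h _ _ hm hm
      _ ≤ √2 * (C * √(2 ^ k : ℕ) - D) + ε := by gcongr
      _ ≤ C * √((2 ^ (k + 1) : ℕ) : ℝ) - D := by rw [hsqrt]; linarith

theorem le_mul_sqrt_sub_add_log (ha : ∀ n, 1 ≤ n → 0 ≤ a n)
    (h : ∀ m n, 1 ≤ m → 1 ≤ n → a (m + n) ≤ √(a m ^ 2 + a n ^ 2) + ε) (hε : 0 ≤ ε)
    (hD0 : 0 ≤ D) (hDC : D ≤ C) (hpow : ∀ k, a (2 ^ k) ≤ C * √(2 ^ k : ℕ) - D) :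
    ∀ n, 1 ≤ n → a n ≤ C * √n - D + ε * Nat.log 2 n := by
  intro n
  induction n using Nat.strong_induction_on with
  | _ n ih =>
  intro hn
  set k := Nat.log 2 n
  set r := n - 2 ^ k
  have hkn : 2 ^ k ≤ n := Nat.pow_log_le_self 2 (by omega)
  have hnk : n < 2 ^ (k + 1) := Nat.lt_pow_succ_log_self one_lt_two n
  have hr : r < 2 ^ k := by rw [pow_succ] at hnk; omega
  have hn_eq : n = 2 ^ k + r := by omega
  obtain hr0 | hr1 := Nat.eq_zero_or_pos r
  · rw [hr0, add_zero] at hn_eq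
    have hpow_k := hpow k
    rw [← hn_eq] at hpow_k
    have : 0 ≤ ε * k := by positivity
    linarith
  · have hm : 1 ≤ 2 ^ k := Nat.one_le_two_pow
    have hlog : Nat.log 2 r + 1 ≤ k := Nat.log_lt_of_lt_pow (by omega) hr
    have har := ih r (by omega) hr1
    have hsqrt_ge {j : ℕ} (hj : 1 ≤ j) : D ≤ C * √(j : ℝ) := by
      have : 1 ≤ √(j : ℝ) := Real.one_le_sqrt.2 (by exact_mod_cast hj)
      nlinarith
    have hsplit : √(((2 ^ k : ℕ) : ℝ)) ^ 2 + √(r : ℝ) ^ 2 = √(n : ℝ) ^ 2 := by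
      simp only [Real.sq_sqrt (Nat.cast_nonneg _)]; rw [hn_eq]; push_cast; ring
    calc a n = a (2 ^ k + r) := by rw [← hn_eq]
      _ ≤ √(a (2 ^ k) ^ 2 + a r ^ 2) + ε := h _ _ hm hr1
      _ ≤ √((C * √(2 ^ k : ℕ) - D) ^ 2 + ((C * √r - D) + ε * Nat.log 2 r) ^ 2) + ε := by
          gcongr
          · exact ha _ hm
          · exact hpow k
          · exact ha _ hr1
      _ ≤ √((C * √(2 ^ k : ℕ) - D) ^ 2 + (C * √r - D) ^ 2) + ε * Nat.log 2 r + ε := by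
          gcongr
          exact Real.sqrt_sq_add_sq_add_le _ _ (by positivity)
      _ ≤ √((C * √(2 ^ k : ℕ)) ^ 2 + (C * √r) ^ 2) - D + ε * Nat.log 2 r + ε := by
          gcongr
          exact Real.sqrt_sub_sq_add_sub_sq_le hD0 (hsqrt_ge hm) (hsqrt_ge hr1)
      _ = C * √n - D + ε * (Nat.log 2 r + 1 : ℕ) := by
          rw [mul_pow, mul_pow, ← mul_add, hsplit, ← mul_pow,
            Real.sqrt_sq (mul_nonneg (hD0.trans hDC) (Real.sqrt_nonneg _))]
          push_cast
          ring
      _ ≤ C * √n - D + ε * k := by gcongr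

end

/-- Lemma 7.2: if nonnegative numbers `a_1, a_2, …` satisfy
`a_{m+n} ≤ √(a_m² + a_n²) + ε` for all `m, n ≥ 1`, then
`a_n ≤ (a_1 + (√2/(√2 - 1)) ε) √n` for all `n ≥ 1`. -/
theorem subadditive_sqrt_upper (a : ℕ → ℝ) (ε : ℝ) (hε : 0 < ε)
    (ha : ∀ n, 1 ≤ n → 0 ≤ a n)
    (h : ∀ m n, 1 ≤ m → 1 ≤ n → a (m + n) ≤ Real.sqrt ((a m) ^ 2 + (a n) ^ 2) + ε) :
    ∀ n, 1 ≤ n →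
      a n ≤ (a 1 + (Real.sqrt 2 / (Real.sqrt 2 - 1)) * ε) * Real.sqrt n := by
  intro n hn
  have hs : 0 < √2 - 1 := sub_pos.2 Real.one_lt_sqrt_two
  obtain ⟨D, hD⟩ : ∃ D, (√2 - 1) * D = ε := ⟨ε / (√2 - 1), mul_div_cancel₀ ε hs.ne'⟩
  have hεD : ε ≤ D := by nlinarith [Real.sqrt_two_lt_three_halves]
  have hconst : √2 / (√2 - 1) * ε = D + ε := by
    rw [div_mul_eq_mul_div, div_eq_iff hs.ne']
    linear_combination -hD
  have hpow := le_mul_sqrt_two_pow_sub ha h (C := a 1 + D) hD.ge (add_sub_cancel_right _ _).ge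
  have hmain := le_mul_sqrt_sub_add_log ha h hε.le (hε.le.trans hεD)
    (le_add_of_nonneg_left (ha 1 le_rfl)) hpow n hn
  have hlog : (Nat.log 2 n : ℝ) ≤ √n + 1 :=
    calc (Nat.log 2 n : ℝ) ≤ (Nat.sqrt n + 1 : ℕ) := by
          exact_mod_cast Nat.log_two_le_sqrt_add_one n
      _ ≤ √n + 1 := by push_cast; linarith [Real.nat_sqrt_le_real_sqrt (a := n)]
  rw [add_mul, hconst]
  nlinarith [mul_le_mul_of_nonneg_left hlog hε.le]
end

section
/- Let numbers a_1, a_2, … ∈ [0,∞) and ε > 0 satisfy a_{m+n} ≥ √(a_m² + a_n²) − ε for all m, n ∈ {1,2,…}. Then a_n ≥ (a_1 − (√2/(√2−1)) ε) √n for all n. -/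
/- Auxiliary facts about √2 -/
private lemma sqrt2_sq : (Real.sqrt 2)^2 = 2 := Real.sq_sqrt (by norm_num)
private lemma sqrt2_lb : 1.4142 ≤ Real.sqrt 2 := by nlinarith [sqrt2_sq, Real.sqrt_nonneg 2]
private lemma sqrt2_ub : Real.sqrt 2 ≤ 1.41422 := by nlinarith [sqrt2_sq, Real.sqrt_nonneg 2]

/-- Triangle inequality for the Euclidean norm in the plane. -/
private lemma sqrt_tri (x y p q : ℝ) (hx : 0 ≤ x) (hy : 0 ≤ y) (hp : 0 ≤ p) (hq : 0 ≤ q) :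
    Real.sqrt ((x+p)^2 + (y+q)^2) ≤ Real.sqrt (x^2+y^2) + Real.sqrt (p^2+q^2) := by
  have hA : (0:ℝ) ≤ x^2+y^2 := by positivity
  have hB : (0:ℝ) ≤ p^2+q^2 := by positivity
  have h1 : Real.sqrt (x^2+y^2) ^ 2 = x^2+y^2 := Real.sq_sqrt hA
  have h2 : Real.sqrt (p^2+q^2) ^ 2 = p^2+q^2 := Real.sq_sqrt hB
  have hm : x*p + y*q ≤ Real.sqrt (x^2+y^2) * Real.sqrt (p^2+q^2) := by
    rw [← Real.sqrt_mul hA]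
    have hcs : (x*p+y*q)^2 ≤ (x^2+y^2)*(p^2+q^2) := by nlinarith [sq_nonneg (x*q - y*p)]
    calc x*p+y*q = Real.sqrt ((x*p+y*q)^2) := (Real.sqrt_sq (by positivity)).symm
      _ ≤ _ := Real.sqrt_le_sqrt hcs
  have hS : 0 ≤ Real.sqrt (x^2+y^2) + Real.sqrt (p^2+q^2) := by positivity
  calc Real.sqrt ((x+p)^2+(y+q)^2)
      ≤ Real.sqrt ((Real.sqrt (x^2+y^2) + Real.sqrt (p^2+q^2))^2) := by
        apply Real.sqrt_le_sqrt; nlinarith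
    _ = _ := Real.sqrt_sq hS

/-- Even split: `v = u`, `t² = 2u²`. -/
private lemma core_even (u t r : ℝ) (hu1 : 1 ≤ u) (ht0 : 0 ≤ t)
    (hr2 : r^2 = 2) (hrl : 1.4142 ≤ r) (hru : r ≤ 1.41422)
    (ht2 : t^2 = u^2 + u^2) :
    (u-1)^2 + (u-1)^2 ≤ (t - 2 + r/2)^2 := by
  have hrut : r * u ≤ t := by
    nlinarith [mul_nonneg (by linarith : (0:ℝ) ≤ r) (by linarith : (0:ℝ) ≤ u)]
  have hru1 : r ≤ r * u := by
    nlinarith [mul_nonneg (by linarith : (0:ℝ) ≤ r) (by linarith : (0:ℝ) ≤ u - 1)]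
  have hA : 0 ≤ r*u - 2 + r/2 := by linarith
  have h17 : r ≤ 17/12 := by nlinarith
  have hsq : (u-1)^2 + (u-1)^2 ≤ (r*u - 2 + r/2)^2 := by
    nlinarith [mul_nonneg (by linarith : (0:ℝ) ≤ 6 - 4*r) (by linarith : (0:ℝ) ≤ u - 1), hr2]
  have hmono : (r*u - 2 + r/2)^2 ≤ (t - 2 + r/2)^2 :=
    pow_le_pow_left₀ hA (by linarith) 2
  linarith

/-- Odd split with `u² ≥ 3`. -/
private lemma core_odd_big (u v t r : ℝ) (hu1 : 1 ≤ u) (hv0 : 0 ≤ v) (ht0 : 0 ≤ t)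
    (hr2 : r^2 = 2) (hrl : 1.4142 ≤ r) (hru : r ≤ 1.41422)
    (hv2 : v^2 = u^2 + 1) (ht2 : t^2 = u^2 + v^2) (hbig : 3 ≤ u^2) :
    (u-1)^2 + (v-1)^2 ≤ (t - 2 + r/2)^2 := by
  have ht2' : t^2 = 2*u^2 + 1 := by linarith
  have ht7 : 7 ≤ t^2 := by linarith
  have ht26 : (529:ℝ)/200 ≤ t := by nlinarith
  have hw0 : 0 ≤ u*v := mul_nonneg (by linarith) hv0
  have hwsq : (2*(u*v))^2 = t^4 - 1 := by
    linear_combination (-(t^2+2*u^2+1))*ht2' + 4*u^2*hv2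
  have hpos : 0 < t^2 - 1/3 + 2*(u*v) := by linarith
  have hwlb : 2*(u*v) ≥ t^2 - 1/3 := by nlinarith [hwsq, hpos]
  have hs2 : (u+v)^2 = t^2 + 2*(u*v) := by linear_combination -ht2
  have hs0 : 0 ≤ u + v := by linarith
  have h4s : 4*(u+v)^2 ≥ 8*t^2 - 4/3 := by linarith [hs2, hwlb]
  have hRHS0 : (0:ℝ) ≤ (4-r)*t + 2*r - 5/2 := by
    nlinarith [mul_le_mul (by linarith : (2.58578:ℝ) ≤ 4 - r) ht26 (by norm_num) (by linarith)]
  have h1 : (0:ℝ) ≤ (8*r-10)*(t-529/200)^2 :=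
    mul_nonneg (by linarith) (sq_nonneg _)
  have h2 : (0:ℝ) ≤ (533/25*r - 249/10)*(t-529/200) :=
    mul_nonneg (by linarith) (by linarith)
  have h3 : (0:ℝ) ≤ 13029/1250*r - 137803/12000 := by linarith
  have hz : (r^2-2)*(t-2)^2 = 0 := by rw [hr2]; ring
  have hid : 8*t^2 - 4/3 - ((4-r)*t + 2*r - 5/2)^2
      = (8*r-10)*(t-529/200)^2 + (533/25*r - 249/10)*(t-529/200)
        + (13029/1250*r - 137803/12000) - (r^2-2)*(t-2)^2 := by ring
  have hquad : 8*t^2 - 4/3 ≥ ((4-r)*t + 2*r - 5/2)^2 := by linarith [h1, h2, h3, hz, hid]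
  have hSsq : ((4-r)*t + 2*r - 5/2)^2 ≤ (2*(u+v))^2 := by
    have e : (2*(u+v))^2 = 4*(u+v)^2 := by ring
    linarith [hquad, h4s, e]
  have hmain : (4-r)*t + 2*r - 5/2 ≤ 2*(u+v) :=
    le_of_pow_le_pow_left₀ two_ne_zero (by linarith) hSsq
  have hid2 : (t - 2 + r/2)^2 - ((u-1)^2+(v-1)^2)
      = (t^2 - (u^2+v^2)) + (r^2-2)/4 + (2*(u+v) - ((4-r)*t + 2*r - 5/2)) := by ring
  linarith [hid2, hmain, ht2, hr2]

/-- Odd split, `k = 1`. -/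
private lemma core_odd_k1 (v t r : ℝ) (hrl : 1.4142 ≤ r) (hru : r ≤ 1.41422)
    (hv : v = r) (ht2 : t^2 = 3) (ht0 : 0 ≤ t) :
    (1-1)^2 + (v-1)^2 ≤ (t - 2 + r/2)^2 := by
  rw [hv]
  have hq : 1.73205 ≤ t := by nlinarith
  have h1 : r - 1 ≤ t - 2 + r/2 := by linarith
  have h2 : (0:ℝ) ≤ r - 1 := by linarith
  have := pow_le_pow_left₀ h2 h1 2
  linarith

/-- Odd split, `k = 2`. -/
private lemma core_odd_k2 (u v t r : ℝ) (hr2 : r^2 = 2) (hrl : 1.4142 ≤ r) (hru : r ≤ 1.41422)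
    (hu : u = r) (hv2 : v^2 = 3) (hv0 : 0 ≤ v) (ht2 : t^2 = 5) (ht0 : 0 ≤ t) :
    (u-1)^2 + (v-1)^2 ≤ (t - 2 + r/2)^2 := by
  rw [hu]
  have hvl : 1.73205 ≤ v := by nlinarith
  have hvu : v ≤ 1.73206 := by nlinarith
  have htl : 2.236 ≤ t := by nlinarith
  have h1 : (r-1)^2 ≤ 0.41422^2 := pow_le_pow_left₀ (by linarith) (by linarith) 2
  have h2 : (v-1)^2 ≤ 0.73206^2 := pow_le_pow_left₀ (by linarith) (by linarith) 2
  have h3 : (0.9431:ℝ)^2 ≤ (t - 2 + r/2)^2 := pow_le_pow_left₀ (by norm_num) (by linarith) 2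
  nlinarith [h1, h2, h3]

private lemma one_le_sqrt_nat (k : ℕ) (hk : 1 ≤ k) : 1 ≤ Real.sqrt k := by
  rw [show (1:ℝ) = Real.sqrt 1 from (Real.sqrt_one).symm]
  exact Real.sqrt_le_sqrt (by exact_mod_cast hk)

private lemma sq_sqrt_nat (k : ℕ) : (Real.sqrt k)^2 = (k:ℝ) := Real.sq_sqrt (by positivity)

/-- Key numerical inequality for the splitting `n = k + m`, `m ∈ {k, k+1}`. -/
private lemma key_ineq (k m : ℕ) (hk : 1 ≤ k) (hm : m = k ∨ m = k + 1) :
    Real.sqrt ((Real.sqrt k - 1)^2 + (Real.sqrt m - 1)^2)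
      ≤ Real.sqrt ((k:ℝ) + (m:ℝ)) - 2 + Real.sqrt 2 / 2 := by
  set r := Real.sqrt 2 with hrdef
  have hr2 := sqrt2_sq
  have hrl := sqrt2_lb
  have hru := sqrt2_ub
  set t := Real.sqrt ((k:ℝ) + (m:ℝ)) with htdef
  have ht0 : 0 ≤ t := Real.sqrt_nonneg _
  have ht2 : t^2 = (k:ℝ) + (m:ℝ) := Real.sq_sqrt (by positivity)
  have hkm2 : (2:ℝ) ≤ (k:ℝ) + (m:ℝ) := by
    have : 2 ≤ k + m := by omega
    exact_mod_cast this
  have htr : r ≤ t := by nlinarith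
  have hD0 : 0 ≤ t - 2 + r/2 := by linarith
  have hu1 : 1 ≤ Real.sqrt k := one_le_sqrt_nat k hk
  have hu2 : (Real.sqrt k)^2 = (k:ℝ) := sq_sqrt_nat k
  have hC : (Real.sqrt k - 1)^2 + (Real.sqrt m - 1)^2 ≤ (t - 2 + r/2)^2 := by
    rcases hm with h | h
    · rw [h]; rw [h] at ht2
      exact core_even (Real.sqrt k) t r hu1 ht0 hr2 hrl hru (by rw [hu2]; exact ht2)
    · subst h
      have hv2 : (Real.sqrt (k+1:ℕ))^2 = (Real.sqrt k)^2 + 1 := by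
        rw [sq_sqrt_nat, hu2]; push_cast; ring
      have hv0 : 0 ≤ Real.sqrt (k+1:ℕ) := Real.sqrt_nonneg _
      rcases Nat.lt_or_ge k 3 with hk3 | hk3
      · interval_cases k
        · -- k = 1
          have e1 : Real.sqrt ((1:ℕ):ℝ) = 1 := by norm_num
          have e2 : Real.sqrt ((1:ℕ)+1:ℕ) = r := by norm_num [hrdef]
          have et : t^2 = 3 := by rw [ht2]; norm_num
          rw [e1, e2]
          exact core_odd_k1 r t r hrl hru rfl et ht0
        · -- k = 2
          have e1 : Real.sqrt ((2:ℕ):ℝ) = r := by norm_num [hrdef]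
          have e2 : (Real.sqrt ((2:ℕ)+1:ℕ))^2 = 3 := by
            rw [sq_sqrt_nat]; norm_num
          have et : t^2 = 5 := by rw [ht2]; norm_num
          rw [e1]
          exact core_odd_k2 r (Real.sqrt ((2:ℕ)+1:ℕ)) t r hr2 hrl hru rfl e2
            (Real.sqrt_nonneg _) et ht0
      · have hbig : (3:ℝ) ≤ (Real.sqrt k)^2 := by rw [hu2]; exact_mod_cast hk3
        exact core_odd_big (Real.sqrt k) (Real.sqrt (k+1:ℕ)) t r hu1 hv0 ht0
          hr2 hrl hru hv2 (by rw [ht2, hv2, hu2]; push_cast; ring) hbig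
  calc Real.sqrt ((Real.sqrt k - 1)^2 + (Real.sqrt m - 1)^2)
      ≤ Real.sqrt ((t - 2 + r/2)^2) := Real.sqrt_le_sqrt hC
    _ = t - 2 + r/2 := Real.sqrt_sq hD0

/-- The inductive lower bound `a n ≥ a 1 √n - ε B (√n - 1)` with `B = √2/(√2-1)`. -/
private lemma aux_lower (a : ℕ → ℝ) (ε : ℝ) (hε : 0 < ε)
    (ha : ∀ n, 1 ≤ n → 0 ≤ a n)
    (h : ∀ m n, 1 ≤ m → 1 ≤ n → a (m + n) ≥ Real.sqrt ((a m) ^ 2 + (a n) ^ 2) - ε) :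
    ∀ n, 1 ≤ n → a n ≥ a 1 * Real.sqrt n
      - ε * (Real.sqrt 2 / (Real.sqrt 2 - 1)) * (Real.sqrt n - 1) := by
  have hr2 := sqrt2_sq
  have hrl := sqrt2_lb
  have hru := sqrt2_ub
  set r := Real.sqrt 2 with hrdef
  set B : ℝ := r / (r - 1) with hBdef
  have hB0 : 0 ≤ B := div_nonneg (by linarith) (by linarith)
  have hB1 : B * (1 - r/2) = 1 := by
    rw [hBdef]
    have hne : r - 1 ≠ 0 := by intro hc; rw [sub_eq_zero] at hc; rw [hc] at hrl; norm_num at hrl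
    field_simp
    nlinarith [hr2]
  have ha1 : 0 ≤ a 1 := ha 1 le_rfl
  have hεB : 0 ≤ ε * B := mul_nonneg hε.le hB0
  intro n
  induction n using Nat.strong_induction_on with
  | _ n ih =>
  intro hn
  rcases Nat.lt_or_ge n 2 with h2 | h2
  · have hn1 : n = 1 := by omega
    subst hn1
    have e1 : Real.sqrt ((1:ℕ):ℝ) = 1 := by norm_num
    rw [e1]
    nlinarith []
  · set k := n / 2 with hkdef
    set m := n - n / 2 with hmdef
    have hk1 : 1 ≤ k := by omega
    have hm1 : 1 ≤ m := by omega
    have hkm : k + m = n := by omega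
    have hkn : k < n := by omega
    have hmn : m < n := by omega
    have hmcase : m = k ∨ m = k + 1 := by omega
    have ihk := ih k hkn hk1
    have ihm := ih m hmn hm1
    have hak : 0 ≤ a k := ha k hk1
    have ham : 0 ≤ a m := ha m hm1
    have hu1 : 1 ≤ Real.sqrt k := one_le_sqrt_nat k hk1
    have hv1 : 1 ≤ Real.sqrt m := one_le_sqrt_nat m hm1
    set x := min (a k) (a 1 * Real.sqrt k) with hxdef
    set y := min (a m) (a 1 * Real.sqrt m) with hydef
    have hx0 : 0 ≤ x := le_min hak (by positivity)
    have hy0 : 0 ≤ y := le_min ham (by positivity)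
    have hxa : x ≤ a k := min_le_left _ _
    have hya : y ≤ a m := min_le_left _ _
    have hxX : x ≤ a 1 * Real.sqrt k := min_le_right _ _
    have hyY : y ≤ a 1 * Real.sqrt m := min_le_right _ _
    have hXx : a 1 * Real.sqrt k - x ≤ ε * B * (Real.sqrt k - 1) := by
      rcases le_total (a k) (a 1 * Real.sqrt k) with hc | hc
      · rw [hxdef, min_eq_left hc]; linarith [ihk]
      · rw [hxdef, min_eq_right hc]
        have : 0 ≤ ε * B * (Real.sqrt k - 1) := mul_nonneg hεB (by linarith)
        linarith
    have hYy : a 1 * Real.sqrt m - y ≤ ε * B * (Real.sqrt m - 1) := by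
      rcases le_total (a m) (a 1 * Real.sqrt m) with hc | hc
      · rw [hydef, min_eq_left hc]; linarith [ihm]
      · rw [hydef, min_eq_right hc]
        have : 0 ≤ ε * B * (Real.sqrt m - 1) := mul_nonneg hεB (by linarith)
        linarith
    have step1 : a n ≥ Real.sqrt ((a k)^2 + (a m)^2) - ε := by
      have := h k m hk1 hm1
      rwa [hkm] at this
    have step2 : Real.sqrt (x^2 + y^2) ≤ Real.sqrt ((a k)^2+(a m)^2) :=
      Real.sqrt_le_sqrt (by nlinarith [hx0, hxa, hy0, hya])
    have tri := sqrt_tri x y (a 1 * Real.sqrt k - x) (a 1 * Real.sqrt m - y)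
      hx0 hy0 (by linarith [hxX]) (by linarith [hyY])
    rw [show x + (a 1 * Real.sqrt k - x) = a 1 * Real.sqrt k by ring,
        show y + (a 1 * Real.sqrt m - y) = a 1 * Real.sqrt m by ring] at tri
    have eqA : Real.sqrt ((a 1 * Real.sqrt k)^2 + (a 1 * Real.sqrt m)^2)
        = a 1 * Real.sqrt ((k:ℝ)+(m:ℝ)) := by
      rw [show (a 1 * Real.sqrt k)^2 + (a 1 * Real.sqrt m)^2 = (a 1)^2 * ((k:ℝ)+(m:ℝ)) by
            rw [mul_pow, mul_pow, sq_sqrt_nat, sq_sqrt_nat]; ring,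
          Real.sqrt_mul (sq_nonneg _), Real.sqrt_sq ha1]
    have b1 : (a 1 * Real.sqrt k - x)^2 ≤ (ε*B*(Real.sqrt k - 1))^2 :=
      pow_le_pow_left₀ (by linarith [hxX]) hXx 2
    have b2 : (a 1 * Real.sqrt m - y)^2 ≤ (ε*B*(Real.sqrt m - 1))^2 :=
      pow_le_pow_left₀ (by linarith [hyY]) hYy 2
    have bnd1 : Real.sqrt ((a 1 * Real.sqrt k - x)^2 + (a 1 * Real.sqrt m - y)^2)
        ≤ Real.sqrt ((ε*B*(Real.sqrt k - 1))^2 + (ε*B*(Real.sqrt m - 1))^2) :=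
      Real.sqrt_le_sqrt (by linarith)
    have eqB : Real.sqrt ((ε*B*(Real.sqrt k - 1))^2 + (ε*B*(Real.sqrt m - 1))^2)
        = ε*B*Real.sqrt ((Real.sqrt k - 1)^2 + (Real.sqrt m - 1)^2) := by
      rw [show (ε*B*(Real.sqrt k - 1))^2 + (ε*B*(Real.sqrt m - 1))^2
            = (ε*B)^2 * ((Real.sqrt k - 1)^2 + (Real.sqrt m - 1)^2) by ring,
          Real.sqrt_mul (sq_nonneg _), Real.sqrt_sq hεB]
    have keyb := key_ineq k m hk1 hmcase
    have hcast : ((k:ℝ) + (m:ℝ)) = (n:ℝ) := by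
      rw [← hkm]; push_cast; ring
    rw [hcast] at eqA keyb
    have hg : ε*B*Real.sqrt ((Real.sqrt k - 1)^2 + (Real.sqrt m - 1)^2)
        ≤ ε*B*(Real.sqrt n - 2 + r/2) :=
      mul_le_mul_of_nonneg_left keyb hεB
    have hfin : ε*B*(Real.sqrt n - 2 + r/2) + ε = ε*B*(Real.sqrt n - 1) := by
      linear_combination (-ε) * hB1
    rw [eqA] at tri
    rw [eqB] at bnd1
    linarith [step1, step2, tri, bnd1, hg, hfin]

/-- Formula (7.3): if nonnegative numbers `a_1, a_2, …` satisfy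
`a_{m+n} ≥ √(a_m² + a_n²) - ε` for all `m, n ≥ 1`, then
`a_n ≥ (a_1 - (√2/(√2 - 1)) ε) √n` for all `n ≥ 1`. -/
theorem superadditive_sqrt_lower (a : ℕ → ℝ) (ε : ℝ) (hε : 0 < ε)
    (ha : ∀ n, 1 ≤ n → 0 ≤ a n)
    (h : ∀ m n, 1 ≤ m → 1 ≤ n → a (m + n) ≥ Real.sqrt ((a m) ^ 2 + (a n) ^ 2) - ε) :
    ∀ n, 1 ≤ n →
      a n ≥ (a 1 - (Real.sqrt 2 / (Real.sqrt 2 - 1)) * ε) * Real.sqrt n := by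
  intro n hn
  have haux := aux_lower a ε hε ha h n hn
  have hB0 : 0 ≤ Real.sqrt 2 / (Real.sqrt 2 - 1) :=
    div_nonneg (Real.sqrt_nonneg 2) (by linarith [sqrt2_lb])
  nlinarith [haux, mul_nonneg hε.le hB0]
end

section
/- Let numbers a_1, a_2, … ∈ [0,∞) satisfy sup_{m,n} |a_{m+n} − √(a_m² + a_n²)| < ∞. Then the limit lim_{n→∞} (a_n/√n) exists in [0,∞). -/
/-!
Squaring turns the hypothesis into almost additivity of `b n = a n ^ 2`, with error
`O(a (m + n))`. Splitting `n` into two halves shows `a n = O(√n)`, so the error is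
`O(√(m + n))`. For such `b`, the averages `b (2 ^ j * n) / (2 ^ j * n)` form a Cauchy sequence
with ratio `1 / √2`. Their limit `ℓ n` is within `O(1 / √n)` of `b n / n`, and it satisfies
`(m + n) ℓ (m + n) = m ℓ m + n ℓ n`, so it does not depend on `n`. Hence `a n ^ 2 / n`
converges.
-/

open Filter Topology

lemma Real.sqrt_two_pow_mul (j : ℕ) (x : ℝ) : √(2 ^ j * x) = √2 ^ j * √x := by
  have h2 : (2 : ℝ) ^ j = (√2 ^ j) ^ 2 := by
    rw [← pow_mul, mul_comm, pow_mul, Real.sq_sqrt zero_le_two]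
  rw [h2, Real.sqrt_mul (by positivity), Real.sqrt_sq (by positivity)]

lemma Real.six_fifths_mul_sqrt_add_le {x y : ℝ} (hx : 0 ≤ x) (hxy : x ≤ y) (hy : y ≤ 2 * x) :
    6 / 5 * √(x + y) ≤ √x + √y := by
  have hsx := Real.sq_sqrt hx
  have hsy := Real.sq_sqrt (hx.trans hxy)
  have hxt : x ≤ √x * √y :=
    (Real.mul_self_sqrt hx).symm.trans_le
      (mul_le_mul_of_nonneg_left (Real.sqrt_le_sqrt hxy) (Real.sqrt_nonneg x))
  have h : √(x + y) ≤ 5 / 6 * (√x + √y) :=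
    Real.sqrt_le_iff.2 ⟨by positivity, by nlinarith⟩
  linarith

lemma abs_sq_sub_sq_le_of_abs_sub_le {x y C : ℝ} (hx : 0 ≤ x) (hy : 0 ≤ y) (h : |x - y| ≤ C) :
    |x ^ 2 - y ^ 2| ≤ 2 * C * x + C ^ 2 := by
  have hyx : y ≤ x + C := by linarith [abs_sub_le_iff.1 h]
  rw [sq_sub_sq, abs_mul, abs_of_nonneg (add_nonneg hx hy)]
  nlinarith [abs_nonneg (x - y)]

lemma Real.sqrt_sq_add_sq_add_le_s15 {M C x y : ℝ} (hC : 0 ≤ C) (hM : 40 * C ≤ M) (hx : 1 ≤ x)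
    (hxy : x ≤ y) (hy : y ≤ 2 * x) :
    √((M * √x - 10 * C) ^ 2 + (M * √y - 10 * C) ^ 2) + C ≤ M * √(x + y) - 10 * C := by
  have hM0 : 0 ≤ M := by linarith
  have hsplit := Real.six_fifths_mul_sqrt_add_le (by linarith) hxy hy
  have hsx := Real.sq_sqrt (by linarith : 0 ≤ x)
  have hsy := Real.sq_sqrt (by linarith : 0 ≤ y)
  have hsxy := Real.sq_sqrt (by linarith : 0 ≤ x + y)
  have hsxy1 : 1 ≤ √(x + y) := Real.one_le_sqrt.2 (by linarith)
  rw [← le_sub_iff_add_le, Real.sqrt_le_iff]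
  refine ⟨by nlinarith, ?_⟩
  have e : (M * √(x + y) - 10 * C - C) ^ 2 - ((M * √x - 10 * C) ^ 2 + (M * √y - 10 * C) ^ 2)
      = 20 * M * C * (√x + √y) - 22 * M * C * √(x + y) - 79 * C ^ 2 := by
    linear_combination M ^ 2 * hsxy - M ^ 2 * hsx - M ^ 2 * hsy
  nlinarith [mul_nonneg (mul_nonneg hM0 hC) (sub_nonneg.2 hsplit),
    mul_nonneg (mul_nonneg hC (sub_nonneg.2 hM)) (zero_le_one.trans hsxy1),
    mul_nonneg (sq_nonneg C) (sub_nonneg.2 hsxy1)]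

theorem exists_le_mul_sqrt_of_le_sqrt_sq_add_sq {a : ℕ → ℝ} {C : ℝ} (ha : ∀ n, 1 ≤ n → 0 ≤ a n)
    (hC : 0 ≤ C) (h : ∀ m n, 1 ≤ m → 1 ≤ n → a (m + n) ≤ √(a m ^ 2 + a n ^ 2) + C) :
    ∃ M, ∀ n, 1 ≤ n → a n ≤ M * √n := by
  set M := a 1 + 40 * C
  have hM : 40 * C ≤ M := by linarith [ha 1 le_rfl]
  -- The slack `10 * C` absorbs the error `C` since `√m + √k ≥ 6 / 5 * √(m + k)` for halves.
  suffices key : ∀ n, 1 ≤ n → a n ≤ M * √n - 10 * C from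
    ⟨M, fun n hn => (key n hn).trans (by linarith)⟩
  intro n hn
  induction n using Nat.strong_induction_on with
  | _ n ih =>
  obtain rfl | hn2 : n = 1 ∨ 2 ≤ n := by omega
  · simp only [M, Nat.cast_one, Real.sqrt_one, mul_one]
    linarith
  obtain ⟨m, k, rfl, hm, hmk, hkm⟩ : ∃ m k, m + k = n ∧ 1 ≤ m ∧ m ≤ k ∧ k ≤ 2 * m :=
    ⟨n / 2, n - n / 2, by omega, by omega, by omega, by omega⟩
  push_cast
  calc a (m + k) ≤ √(a m ^ 2 + a k ^ 2) + C := h m k hm (by omega)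
    _ ≤ √((M * √m - 10 * C) ^ 2 + (M * √k - 10 * C) ^ 2) + C := by
        gcongr
        · exact ha m hm
        · exact ih m (by omega) hm
        · exact ha k (by omega)
        · exact ih k (by omega) (by omega)
    _ ≤ M * √(m + k) - 10 * C :=
        Real.sqrt_sq_add_sq_add_le_s15 hC hM (by exact_mod_cast hm) (by exact_mod_cast hmk)
          (by exact_mod_cast hkm)

def AlmostAdditiveWithSqrtError (b : ℕ → ℝ) (E : ℝ) : Prop :=
  ∀ m n, 1 ≤ m → 1 ≤ n → |b (m + n) - b m - b n| ≤ E * √(m + n)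

noncomputable def dyadicLimit (b : ℕ → ℝ) (n : ℕ) : ℝ :=
  limUnder atTop fun j : ℕ => b (2 ^ j * n) / (2 ^ j * n)

namespace AlmostAdditiveWithSqrtError

variable {b : ℕ → ℝ} {E : ℝ}

lemma dist_div_two_mul_le (hb : AlmostAdditiveWithSqrtError b E) {p : ℕ} (hp : 1 ≤ p) :
    dist (b p / p) (b (2 * p) / (2 * p)) ≤ E / √(2 * p) := by
  have hp0 : (0 : ℝ) < p := by exact_mod_cast hp
  have hbp : |b (2 * p) - b p - b p| ≤ E * √(2 * p) := by
    simpa [two_mul] using hb p p hp hp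
  calc dist (b p / p) (b (2 * p) / (2 * p)) = |b (2 * p) - b p - b p| / (2 * p) := by
        have e : b (2 * p) / (2 * p) - b p / p = (b (2 * p) - b p - b p) / (2 * p) := by
          field_simp; ring
        rw [Real.dist_eq, abs_sub_comm, e, abs_div, abs_of_pos (by positivity : (0 : ℝ) < 2 * p)]
    _ ≤ E * √(2 * p) / (2 * p) := by gcongr
    _ = E / √(2 * p) := by rw [mul_div_assoc, Real.sqrt_div_self, div_eq_mul_inv]

lemma dist_dyadic_le (hb : AlmostAdditiveWithSqrtError b E) {n : ℕ} (hn : 1 ≤ n) (j : ℕ) :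
    dist (b (2 ^ j * n) / (2 ^ j * n)) (b (2 ^ (j + 1) * n) / (2 ^ (j + 1) * n)) ≤
      E / √(2 * n) * (√2)⁻¹ ^ j := by
  have h := hb.dist_div_two_mul_le (one_le_mul (Nat.one_le_two_pow (n := j)) hn)
  rw [show 2 * (2 ^ j * n) = 2 ^ (j + 1) * n by ring] at h
  push_cast at h
  rw [show (2 : ℝ) * (2 ^ j * n) = 2 ^ j * (2 * n) by ring, Real.sqrt_two_pow_mul] at h
  rw [inv_pow, ← div_eq_mul_inv, div_div, mul_comm (√(2 * n)),
    show (2 : ℝ) ^ (j + 1) * n = 2 ^ j * (2 * n) by ring]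
  exact h

lemma cauchySeq_dyadic (hb : AlmostAdditiveWithSqrtError b E) {n : ℕ} (hn : 1 ≤ n) :
    CauchySeq fun j : ℕ => b (2 ^ j * n) / (2 ^ j * n) :=
  cauchySeq_of_le_geometric _ _ (inv_lt_one_of_one_lt₀ Real.one_lt_sqrt_two)
    (hb.dist_dyadic_le hn)

lemma tendsto_dyadicLimit (hb : AlmostAdditiveWithSqrtError b E) {n : ℕ} (hn : 1 ≤ n) :
    Tendsto (fun j : ℕ => b (2 ^ j * n) / (2 ^ j * n)) atTop (𝓝 (dyadicLimit b n)) :=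
  tendsto_nhds_limUnder (cauchySeq_tendsto_of_complete (hb.cauchySeq_dyadic hn))

lemma dist_dyadicLimit_le (hb : AlmostAdditiveWithSqrtError b E) {n : ℕ} (hn : 1 ≤ n) :
    dist (b n / n) (dyadicLimit b n) ≤ E / (√2 - 1) / √n := by
  have h := dist_le_of_le_geometric_of_tendsto₀ _ _ (inv_lt_one_of_one_lt₀ Real.one_lt_sqrt_two)
    (hb.dist_dyadic_le hn) (hb.tendsto_dyadicLimit hn)
  convert h using 1
  · simp
  · rw [Real.sqrt_mul zero_le_two]
    have := Real.one_lt_sqrt_two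
    field_simp

lemma abs_dyadic_add_sub_le (hb : AlmostAdditiveWithSqrtError b E) {m n : ℕ} (hm : 1 ≤ m)
    (hn : 1 ≤ n) (j : ℕ) :
    |(b (2 ^ j * (m + n)) - b (2 ^ j * m) - b (2 ^ j * n)) / 2 ^ j| ≤
      E * √(m + n) * (√2)⁻¹ ^ j := by
  have h := hb _ _ (one_le_mul (Nat.one_le_two_pow (n := j)) hm)
    (one_le_mul (Nat.one_le_two_pow (n := j)) hn)
  push_cast at h
  rw [← mul_add, ← mul_add, Real.sqrt_two_pow_mul] at h
  have h2 : (2 : ℝ) ^ j = √2 ^ j * √2 ^ j := by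
    rw [← mul_pow, Real.mul_self_sqrt zero_le_two]
  rw [abs_div, abs_of_pos (by positivity : (0 : ℝ) < 2 ^ j), div_le_iff₀ (by positivity), h2,
    inv_pow]
  calc _ ≤ E * (√2 ^ j * √(m + n)) := h
    _ = _ := by field_simp

lemma dyadicLimit_add (hb : AlmostAdditiveWithSqrtError b E) {m n : ℕ} (hm : 1 ≤ m)
    (hn : 1 ≤ n) :
    (m + n : ℝ) * dyadicLimit b (m + n) = m * dyadicLimit b m + n * dyadicLimit b n := by
  have hlim := (((hb.tendsto_dyadicLimit (n := m + n) (by omega)).const_mul (m + n : ℝ)).sub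
    ((hb.tendsto_dyadicLimit hm).const_mul (m : ℝ))).sub
    ((hb.tendsto_dyadicLimit hn).const_mul (n : ℝ))
  have hzero : Tendsto
      (fun j : ℕ => (b (2 ^ j * (m + n)) - b (2 ^ j * m) - b (2 ^ j * n)) / 2 ^ j)
      atTop (𝓝 0) := by
    have hgeom := (tendsto_pow_atTop_nhds_zero_of_lt_one (by positivity)
      (inv_lt_one_of_one_lt₀ Real.one_lt_sqrt_two)).const_mul (E * √(m + n))
    rw [mul_zero] at hgeom
    exact squeeze_zero_norm (hb.abs_dyadic_add_sub_le hm hn) hgeom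
  have := tendsto_nhds_unique hlim (hzero.congr fun j => ?_)
  · linarith
  · push_cast
    field_simp

lemma dyadicLimit_eq_dyadicLimit_one (hb : AlmostAdditiveWithSqrtError b E) {n : ℕ}
    (hn : 1 ≤ n) : dyadicLimit b n = dyadicLimit b 1 := by
  induction n, hn using Nat.le_induction with
  | base => rfl
  | succ k hk ih =>
    have h := hb.dyadicLimit_add hk le_rfl
    rw [ih, Nat.cast_one, one_mul] at h
    have hk0 : (k + 1 : ℝ) ≠ 0 := by positivity
    exact mul_left_cancel₀ hk0 (by linarith)

theorem tendsto_div (hb : AlmostAdditiveWithSqrtError b E) :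
    Tendsto (fun n : ℕ => b n / n) atTop (𝓝 (dyadicLimit b 1)) := by
  rw [tendsto_iff_dist_tendsto_zero]
  refine squeeze_zero' (Eventually.of_forall fun n => dist_nonneg) ?_
    ((tendsto_const_nhds (x := E / (√2 - 1))).div_atTop
      (Real.tendsto_sqrt_atTop.comp tendsto_natCast_atTop_atTop))
  filter_upwards [eventually_ge_atTop 1] with n hn
  rw [← hb.dyadicLimit_eq_dyadicLimit_one hn]
  exact hb.dist_dyadicLimit_le hn

end AlmostAdditiveWithSqrtError

/-- Lemma 7.4: if nonnegative numbers `a_1, a_2, …` satisfy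
`sup_{m,n ≥ 1} |a_{m+n} - √(a_m² + a_n²)| < ∞`, then `lim_n a_n/√n` exists in `[0, ∞)`. -/
theorem limit_of_almost_additive_sqrt (a : ℕ → ℝ)
    (ha : ∀ n, 1 ≤ n → 0 ≤ a n)
    (h : ∃ C : ℝ, ∀ m n, 1 ≤ m → 1 ≤ n →
      |a (m + n) - Real.sqrt ((a m) ^ 2 + (a n) ^ 2)| ≤ C) :
    ∃ L : ℝ, 0 ≤ L ∧
      Tendsto (fun n : ℕ => a n / Real.sqrt n) atTop (𝓝 L) := by
  obtain ⟨C, hC⟩ := h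
  have hC0 : 0 ≤ C := (abs_nonneg _).trans (hC 1 1 le_rfl le_rfl)
  obtain ⟨M, hM⟩ := exists_le_mul_sqrt_of_le_sqrt_sq_add_sq ha hC0
    fun m n hm hn => sub_le_iff_le_add'.1 (abs_le.1 (hC m n hm hn)).2
  have hsq : AlmostAdditiveWithSqrtError (fun n => a n ^ 2) (2 * C * M + C ^ 2) := by
    intro m n hm hn
    have h1 : 1 ≤ √(m + n : ℝ) := Real.one_le_sqrt.2 (by norm_cast; omega)
    have haM := hM (m + n) (by omega)
    have hmn := abs_sq_sub_sq_le_of_abs_sub_le (ha _ (by omega)) (Real.sqrt_nonneg _)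
      (hC m n hm hn)
    rw [Real.sq_sqrt (by positivity), ← sub_sub] at hmn
    push_cast at haM
    calc _ ≤ 2 * C * a (m + n) + C ^ 2 := hmn
      _ ≤ 2 * C * (M * √(m + n)) + C ^ 2 * √(m + n) := by gcongr; nlinarith
      _ = _ := by ring
  refine ⟨√(dyadicLimit (fun n => a n ^ 2) 1), Real.sqrt_nonneg _, ?_⟩
  refine ((Real.continuous_sqrt.tendsto _).comp hsq.tendsto_div).congr' ?_
  filter_upwards [eventually_ge_atTop 1] with n hn
  simp [Real.sqrt_div (sq_nonneg _), Real.sqrt_sq (ha n hn)]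
end

section
/- Let a function a : [0,∞) → [0,∞) satisfy sup_{s,t>0} |a(s+t) − √(a²(s) + a²(t))| < ∞ and be bounded on [0,t] for some t > 0. Then the limit lim_{t→∞} (a(t)/√t) exists in [0,∞). -/
/-!
Since `a ≥ 0`, taking `s = t` gives the doubling inequality `a (2t) ≤ √2 a t + C`, which together
with boundedness near `0` yields `a t = O(√t)`. Then `g = a²` is additive up to `O(√(s + t))`:
`|a(s+t)² - (a s² + a t²)| ≤ C (a(s+t) + √(a s² + a t²))`. For such `g`, the ratio `g w / w`
moves by `O(1/√w)` from `w` to `2w`, so along `u, 2u, 4u, …` it stays within `O(1/√u)` of its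
start; writing `s = N t + r` compares `g s / s` with `g t / t` for `t = 2ⁿu` and `s = 4ⁿ`, and
letting `n → ∞` shows `|g u / u - g v / v| = O(1/√u + 1/u)` for `u ≤ v`. Hence `g t / t`
converges, and so does `a t / √t = √(g t / t)`.
-/

open Filter Topology

theorem exists_tendsto_of_dist_le {β α : Type*} [SemilatticeSup β] [Nonempty β]
    [PseudoMetricSpace α] [CompleteSpace α] {φ : β → α} {ψ : β → ℝ} {T : β}
    (hψ : Tendsto ψ atTop (𝓝 0)) (h : ∀ u v, T ≤ u → u ≤ v → dist (φ u) (φ v) ≤ ψ u) :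
    ∃ l, Tendsto φ atTop (𝓝 l) :=
  cauchySeq_tendsto_of_complete <| Metric.cauchySeq_iff'.2 fun _ hε =>
    ((hψ.eventually (gt_mem_nhds hε)).and (eventually_ge_atTop T)).exists.imp
      fun N hN n hn => (dist_comm (φ n) (φ N)).trans_le (h N n hN.2 hn) |>.trans_lt hN.1

def IsSqrtAlmostAdditive (g : ℝ → ℝ) (T D : ℝ) : Prop :=
  ∀ s t, T ≤ s → T ≤ t → |g (s + t) - g s - g t| ≤ D * √(s + t)

namespace IsSqrtAlmostAdditive

variable {g : ℝ → ℝ} {T D Q : ℝ}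

theorem dist_div_two_mul_le (hg : IsSqrtAlmostAdditive g T D) {w : ℝ} (hw₀ : 0 < w)
    (hw : T ≤ w) : dist (g w / w) (g (2 * w) / (2 * w)) ≤ D / √(2 * w) := by
  have hadd := hg w w hw hw
  rw [← two_mul] at hadd
  rw [Real.dist_eq, show g w / w - g (2 * w) / (2 * w) = -(g (2 * w) - g w - g w) / (2 * w) by
      field_simp; ring, abs_div, abs_neg, abs_of_pos (show 0 < 2 * w by positivity),
    div_le_iff₀ (by positivity), div_mul_eq_mul_div, mul_div_assoc, Real.div_sqrt]
  exact hadd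

theorem dist_div_two_pow_mul_le (hg : IsSqrtAlmostAdditive g T D) (hT : 0 < T) (hD : 0 ≤ D)
    {u : ℝ} (hu : T ≤ u) (n : ℕ) :
    dist (g u / u) (g (2 ^ n * u) / (2 ^ n * u)) ≤ (√2 + 1) * D / √u := by
  have hu₀ : 0 < u := hT.trans_le hu
  set c := (√2 + 1) * D
  -- `D / √(2w) = c / √w - c / √(2w)` makes the dyadic errors telescope.
  have step (k : ℕ) : dist (g (2 ^ k * u) / (2 ^ k * u)) (g (2 ^ (k + 1) * u) / (2 ^ (k + 1) * u))
      ≤ c / √(2 ^ k * u) - c / √(2 ^ (k + 1) * u) := by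
    have hw : T ≤ 2 ^ k * u := hu.trans (le_mul_of_one_le_left hu₀.le (one_le_pow₀ one_le_two))
    rw [pow_succ', mul_assoc]
    refine (hg.dist_div_two_mul_le (by positivity) hw).trans_eq ?_
    have h2 : √2 * √2 = 2 := Real.mul_self_sqrt zero_le_two
    rw [Real.sqrt_mul zero_le_two]
    field_simp
    linear_combination (-D) * h2
  have htel := dist_le_range_sum_of_dist_le (f := fun k : ℕ => g (2 ^ k * u) / (2 ^ k * u)) n
    fun _ => step _
  rw [Finset.sum_range_sub'] at htel
  simp only [pow_zero, one_mul] at htel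
  exact htel.trans (sub_le_self _ (by positivity))

theorem abs_map_nat_mul_add_sub_le (hg : IsSqrtAlmostAdditive g T D) (hD : 0 ≤ D) {t r : ℝ}
    (ht₀ : 0 ≤ t) (ht : T ≤ t) (hr : T ≤ r) (N : ℕ) :
    |g (N * t + r) - N * g t - g r| ≤ N * D * √(N * t + r) := by
  induction N with
  | zero => simp
  | succ N ih =>
    have hNt : 0 ≤ N * t := by positivity
    have hsucc : (↑(N + 1) : ℝ) * t + r = t + (N * t + r) := by push_cast; ring
    rw [hsucc]
    have hsqrt : √(N * t + r) ≤ √(t + (N * t + r)) := Real.sqrt_le_sqrt (by linarith)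
    calc |g (t + (N * t + r)) - ↑(N + 1) * g t - g r|
        = |(g (t + (N * t + r)) - g t - g (N * t + r)) + (g (N * t + r) - N * g t - g r)| := by
          push_cast; ring_nf
      _ ≤ D * √(t + (N * t + r)) + N * D * √(N * t + r) :=
          (abs_add_le _ _).trans (add_le_add (hg t _ ht (by linarith)) ih)
      _ ≤ ↑(N + 1) * D * √(t + (N * t + r)) := by
          push_cast
          nlinarith [mul_le_mul_of_nonneg_left hsqrt (by positivity : (0 : ℝ) ≤ N * D)]

theorem abs_div_sub_div_le (hg : IsSqrtAlmostAdditive g T D) (hlin : ∀ t, T ≤ t → |g t| ≤ Q * t)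
    (hD : 0 ≤ D) {t s : ℝ} (ht₀ : 0 < t) (ht : T ≤ t) (hts : t ≤ s) :
    |g s / s - g t / t| ≤ 4 * Q * t / s + D * √s / t := by
  have hs₀ : 0 < s := ht₀.trans_le hts
  -- Write `s = N t + r` with `t ≤ r < 2 t`.
  set N := ⌊(s - t) / t⌋₊
  have hN₁ : N * t ≤ s - t := (le_div_iff₀ ht₀).1 (Nat.floor_le (by positivity))
  have hN₂ : s - t < (N + 1) * t := (div_lt_iff₀ ht₀).1 (Nat.lt_floor_add_one _)
  set r := s - N * t
  have hr : T ≤ r := ht.trans (by linarith)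
  have hsum := hg.abs_map_nat_mul_add_sub_le hD ht₀.le ht hr N
  rw [show N * t + r = s by ring] at hsum
  have hgr := abs_le.1 (hlin r hr)
  have hgt := abs_le.1 (hlin t ht)
  have hnum : |t * g s - s * g t| ≤ 4 * Q * t ^ 2 + D * s * √s := by
    have hsplit : t * g s - s * g t = t * (g s - N * g t - g r) + (t * g r - r * g t) := by ring
    have herr : |t * (g s - N * g t - g r)| ≤ D * s * √s := by
      rw [abs_mul, abs_of_pos ht₀]
      calc t * |g s - N * g t - g r| ≤ t * (N * D * √s) := by gcongr
        _ = N * t * (D * √s) := by ring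
        _ ≤ s * (D * √s) := by gcongr; linarith
        _ = D * s * √s := by ring
    have hmain : |t * g r - r * g t| ≤ 4 * Q * t ^ 2 := by
      rw [abs_le]; constructor <;> nlinarith
    rw [hsplit]
    exact (abs_add_le _ _).trans (by linarith)
  rw [div_sub_div _ _ hs₀.ne' ht₀.ne', abs_div, abs_of_pos (mul_pos hs₀ ht₀),
    div_le_iff₀ (mul_pos hs₀ ht₀), mul_comm (g s) t]
  calc |t * g s - s * g t| ≤ 4 * Q * t ^ 2 + D * s * √s := hnum
    _ = (4 * Q * t / s + D * √s / t) * (s * t) := by field_simp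

theorem dist_div_sq_two_pow_le (hg : IsSqrtAlmostAdditive g T D)
    (hlin : ∀ t, T ≤ t → |g t| ≤ Q * t) (hT : 0 < T) (hD : 0 ≤ D) {w : ℝ} (hw : T ≤ w) {n : ℕ}
    (hwn : w ≤ 2 ^ n) :
    dist (g w / w) (g ((2 ^ n) ^ 2) / (2 ^ n) ^ 2)
      ≤ (√2 + 1) * D / √w + D / w + 4 * Q * w / 2 ^ n := by
  have hw₀ : 0 < w := hT.trans_le hw
  have hn₀ : (0 : ℝ) < 2 ^ n := by positivity
  have hscaled := hg.abs_div_sub_div_le hlin hD (by positivity)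
    (hw.trans (le_mul_of_one_le_left hw₀.le (one_le_pow₀ one_le_two)))
    (show 2 ^ n * w ≤ (2 ^ n) ^ 2 by rw [sq]; gcongr)
  rw [Real.sqrt_sq hn₀.le, ← Real.dist_eq, dist_comm,
    show 4 * Q * (2 ^ n * w) / (2 ^ n) ^ 2 + D * 2 ^ n / (2 ^ n * w) = 4 * Q * w / 2 ^ n + D / w by
      field_simp] at hscaled
  linarith [dist_triangle (g w / w) (g (2 ^ n * w) / (2 ^ n * w)) (g ((2 ^ n) ^ 2) / (2 ^ n) ^ 2),
    hg.dist_div_two_pow_mul_le hT hD hw n]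

theorem dist_div_le (hg : IsSqrtAlmostAdditive g T D) (hlin : ∀ t, T ≤ t → |g t| ≤ Q * t)
    (hT : 0 < T) (hD : 0 ≤ D) {u v : ℝ} (hu : T ≤ u) (hv : T ≤ v) :
    dist (g u / u) (g v / v) ≤ (√2 + 1) * D / √u + D / u + ((√2 + 1) * D / √v + D / v) := by
  have h2n : Tendsto (fun n : ℕ => (2 : ℝ) ^ n) atTop atTop :=
    tendsto_pow_atTop_atTop_of_one_lt one_lt_two
  have hlim : Tendsto (fun n : ℕ => (√2 + 1) * D / √u + D / u + 4 * Q * u / 2 ^ n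
      + ((√2 + 1) * D / √v + D / v + 4 * Q * v / 2 ^ n)) atTop
      (𝓝 ((√2 + 1) * D / √u + D / u + 0 + ((√2 + 1) * D / √v + D / v + 0))) :=
    (tendsto_const_nhds.add (tendsto_const_nhds.div_atTop h2n)).add
      (tendsto_const_nhds.add (tendsto_const_nhds.div_atTop h2n))
  simp only [add_zero] at hlim
  refine ge_of_tendsto hlim ?_
  filter_upwards [h2n.eventually_ge_atTop u, h2n.eventually_ge_atTop v] with n hun hvn
  exact (dist_triangle_right _ _ _).trans (add_le_add
    (hg.dist_div_sq_two_pow_le hlin hT hD hu hun) (hg.dist_div_sq_two_pow_le hlin hT hD hv hvn))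

theorem exists_tendsto_div (hg : IsSqrtAlmostAdditive g T D)
    (hlin : ∀ t, T ≤ t → |g t| ≤ Q * t) (hT : 0 < T) (hD : 0 ≤ D) :
    ∃ l, Tendsto (fun t => g t / t) atTop (𝓝 l) := by
  refine exists_tendsto_of_dist_le (ψ := fun u => 2 * ((√2 + 1) * D / √u + D / u)) (T := T) ?_
    fun u v hu huv => ?_
  · simpa using ((tendsto_const_nhds.div_atTop Real.tendsto_sqrt_atTop).add
      (tendsto_const_nhds.div_atTop tendsto_id)).const_mul 2
  · have hu₀ : 0 < u := hT.trans_le hu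
    have hdecr : (√2 + 1) * D / √v + D / v ≤ (√2 + 1) * D / √u + D / u := by
      gcongr
    linarith [hg.dist_div_le hlin hT hD hu (hu.trans huv)]

end IsSqrtAlmostAdditive

theorem le_of_map_two_mul_le {F : ℝ → ℝ} {T B : ℝ} (hT : 0 < T)
    (hF : ∀ t, T ≤ t → F (2 * t) ≤ F t) (hB : ∀ t ∈ Set.Icc T (2 * T), F t ≤ B) {t : ℝ}
    (ht : T ≤ t) : F t ≤ B := by
  have key (n : ℕ) : ∀ t, T ≤ t → t ≤ 2 ^ (n + 1) * T → F t ≤ B := by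
    induction n with
    | zero => exact fun t h₁ h₂ => hB t ⟨h₁, by simpa using h₂⟩
    | succ n ih =>
      intro t h₁ h₂
      rcases le_or_gt t (2 * T) with h | h
      · exact hB t ⟨h₁, h⟩
      · have hhalf := hF (t / 2) (by linarith)
        rw [mul_div_cancel₀ t two_ne_zero] at hhalf
        exact hhalf.trans (ih _ (by linarith) (by rw [pow_succ] at h₂; linarith))
  obtain ⟨n, hn⟩ := pow_unbounded_of_one_lt (t / T) one_lt_two
  rw [div_lt_iff₀ hT] at hn
  exact key n t ht (by rw [pow_succ]; nlinarith [pow_pos (two_pos : (0 : ℝ) < 2) n])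

theorem sq_le_mul_of_le_mul_sqrt {x K t : ℝ} (hx : 0 ≤ x) (ht : 0 ≤ t) (h : x ≤ K * √t) :
    x ^ 2 ≤ K ^ 2 * t := by
  calc x ^ 2 ≤ (K * √t) ^ 2 := pow_le_pow_left₀ hx h 2
    _ = K ^ 2 * t := by rw [mul_pow, Real.sq_sqrt ht]

section

variable {a : ℝ → ℝ} {C : ℝ}

theorem map_two_mul_le (ha : ∀ t, 0 ≤ t → 0 ≤ a t)
    (hC : ∀ s t, 0 < s → 0 < t → |a (s + t) - √(a s ^ 2 + a t ^ 2)| ≤ C) {t : ℝ} (ht : 0 < t) :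
    a (2 * t) ≤ √2 * a t + C := by
  have h := (abs_le.1 (hC t t ht ht)).2
  rw [← two_mul, ← two_mul, Real.sqrt_mul zero_le_two, Real.sqrt_sq (ha t ht.le)] at h
  linarith

theorem exists_le_mul_sqrt (ha : ∀ t, 0 ≤ t → 0 ≤ a t)
    (hC : ∀ s t, 0 < s → 0 < t → |a (s + t) - √(a s ^ 2 + a t ^ 2)| ≤ C) (hC₀ : 0 ≤ C) {T M : ℝ}
    (hT : 0 < T) (hM : ∀ t ∈ Set.Icc T (2 * T), a t ≤ M) :
    ∃ K, 0 ≤ K ∧ ∀ t, T ≤ t → a t ≤ K * √t := by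
  have hMC : 0 ≤ M + 3 * C := by linarith [ha T hT.le, hM T ⟨le_rfl, by linarith⟩]
  refine ⟨(M + 3 * C) / √T, by positivity, fun t ht => ?_⟩
  have ht₀ : 0 < t := hT.trans_le ht
  -- The shift by `3 C` absorbs the constant of the doubling inequality, as `4 ≤ 3 √2`.
  have hdouble : ∀ t, T ≤ t → (a (2 * t) + 3 * C) / √(2 * t) ≤ (a t + 3 * C) / √t := by
    intro t ht
    have ht₀ : 0 < t := hT.trans_le ht
    have h2 : √2 * √2 = 2 := Real.mul_self_sqrt zero_le_two
    have h32 : 4 ≤ 3 * √2 := by nlinarith [Real.sqrt_nonneg 2]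
    rw [Real.sqrt_mul zero_le_two, div_le_div_iff₀ (by positivity) (by positivity)]
    have hnum : a (2 * t) + 3 * C ≤ √2 * (a t + 3 * C) := by
      nlinarith [map_two_mul_le ha hC ht₀, mul_le_mul_of_nonneg_right h32 hC₀]
    calc (a (2 * t) + 3 * C) * √t ≤ √2 * (a t + 3 * C) * √t := by gcongr
      _ = (a t + 3 * C) * (√2 * √t) := by ring
  have hbound := le_of_map_two_mul_le (F := fun t => (a t + 3 * C) / √t)
    (B := (M + 3 * C) / √T) hT hdouble
    (fun s hs => div_le_div₀ hMC (by linarith [hM s hs]) (Real.sqrt_pos.2 hT)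
      (Real.sqrt_le_sqrt hs.1)) ht
  rw [div_le_iff₀ (Real.sqrt_pos.2 ht₀)] at hbound
  nlinarith

theorem isSqrtAlmostAdditive_sq (ha : ∀ t, 0 ≤ t → 0 ≤ a t)
    (hC : ∀ s t, 0 < s → 0 < t → |a (s + t) - √(a s ^ 2 + a t ^ 2)| ≤ C) (hC₀ : 0 ≤ C)
    {T K : ℝ} (hT : 1 ≤ T) (hK₀ : 0 ≤ K) (hK : ∀ t, T ≤ t → a t ≤ K * √t) :
    IsSqrtAlmostAdditive (fun t => a t ^ 2) T (C * (2 * K + C)) := by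
  intro s t hs ht
  have hsq_le (u : ℝ) (hu : T ≤ u) : a u ^ 2 ≤ K ^ 2 * u :=
    sq_le_mul_of_le_mul_sqrt (ha u (by linarith)) (by linarith) (hK u hu)
  set x := a (s + t)
  set y := √(a s ^ 2 + a t ^ 2)
  have hx : 0 ≤ x := ha _ (by linarith)
  have hy : 0 ≤ y := Real.sqrt_nonneg _
  have hxy := hC s t (by linarith) (by linarith)
  have hyK : y ≤ K * √(s + t) := by
    calc y ≤ √(K ^ 2 * (s + t)) :=
          Real.sqrt_le_sqrt (by linarith [hsq_le s hs, hsq_le t ht])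
      _ = K * √(s + t) := by rw [Real.sqrt_mul (sq_nonneg K), Real.sqrt_sq hK₀]
  have hone : 1 ≤ √(s + t) := Real.one_le_sqrt.2 (by linarith)
  have hdiff : a (s + t) ^ 2 - a s ^ 2 - a t ^ 2 = (x - y) * (x + y) := by
    rw [mul_comm, ← sq_sub_sq, Real.sq_sqrt (by positivity)]; ring
  dsimp only
  rw [hdiff, abs_mul, abs_of_nonneg (add_nonneg hx hy)]
  calc |x - y| * (x + y) ≤ C * (2 * y + C) :=
        mul_le_mul hxy (by linarith [(abs_le.1 hxy).2]) (by positivity) hC₀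
    _ ≤ C * (2 * (K * √(s + t)) + C * √(s + t)) := by gcongr; nlinarith
    _ = C * (2 * K + C) * √(s + t) := by ring

end

/-- Lemma 7.9: if a nonnegative function `a : [0,∞) → [0,∞)` satisfies
`sup_{s,t>0} |a(s+t) - √(a²(s) + a²(t))| < ∞` and is bounded on `[0, t]` for some
`t > 0`, then `lim_{t→∞} a(t)/√t` exists in `[0, ∞)`. -/
theorem limit_of_almost_additive_sqrt_continuous (a : ℝ → ℝ)
    (ha : ∀ t : ℝ, 0 ≤ t → 0 ≤ a t)
    (h : ∃ C : ℝ, ∀ s t : ℝ, 0 < s → 0 < t →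
      |a (s + t) - Real.sqrt ((a s) ^ 2 + (a t) ^ 2)| ≤ C)
    (hbdd : ∃ t : ℝ, 0 < t ∧ ∃ M : ℝ, ∀ s ∈ Set.Icc (0:ℝ) t, a s ≤ M) :
    ∃ L : ℝ, 0 ≤ L ∧
      Tendsto (fun t : ℝ => a t / Real.sqrt t) atTop (𝓝 L) := by
  obtain ⟨C, hC⟩ := h
  obtain ⟨t₀, ht₀, M, hM⟩ := hbdd
  have hC₀ : 0 ≤ C := (abs_nonneg _).trans (hC 1 1 one_pos one_pos)
  obtain ⟨K, hK₀, hK⟩ := exists_le_mul_sqrt ha hC hC₀ (half_pos ht₀) (M := M)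
    fun t ht => hM t ⟨by linarith [ht.1], by linarith [ht.2]⟩
  set T := max (t₀ / 2) 1
  have hKT (t : ℝ) (ht : T ≤ t) : a t ≤ K * √t := hK t ((le_max_left _ _).trans ht)
  have hlin (t : ℝ) (ht : T ≤ t) : |a t ^ 2| ≤ K ^ 2 * t := by
    have ht₀ : 0 ≤ t := by linarith [le_max_right (t₀ / 2) 1]
    rw [abs_sq]
    exact sq_le_mul_of_le_mul_sqrt (ha t ht₀) ht₀ (hKT t ht)
  obtain ⟨l, hl⟩ := (isSqrtAlmostAdditive_sq ha hC hC₀ (le_max_right _ _) hK₀ hKT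
    ).exists_tendsto_div hlin (by positivity) (by positivity)
  refine ⟨√l, Real.sqrt_nonneg l, ((Real.continuous_sqrt.tendsto l).comp hl).congr' ?_⟩
  filter_upwards [eventually_ge_atTop 0] with t ht
  simp [Real.sqrt_div (sq_nonneg _), Real.sqrt_sq (ha t ht)]
end

section
/- Let numbers B_1, B_2, … ∈ [0,∞), α ∈ (0,∞) and r ∈ [0,1] satisfy B_{m+n} ≤ ((m+n)^α/((m+n)^α − r)) · (m B_m + n B_n)/(m+n) + r/(m+n)^α for all m, n with m ≤ n ≤ 2m. Then sup_n B_n ≤ (1 + C_α r) B_1 + C_α r for some constant C_α depending on α only. -/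
/-!
Put `β n = B n + 1` and `c = 2^α / (2^α - 1)`. For `N = n^α ≥ 2^α` one has
`N / (N - r) ≤ 1 + c r / N`, so splitting `n = ⌊n/2⌋ + ⌈n/2⌉` in the recursion gives
`β n ≤ exp (c r n^(-α)) * max (β ⌊n/2⌋) (β ⌈n/2⌉)`. As `⌈n/2⌉ ≤ 2n/3`, the increment `n^(-α)` is
at most the increase of the potential `P x = (1 - x^(-α)) / ((3/2)^α - 1)` from `⌈n/2⌉` to `n`,
so by induction `β n ≤ β 1 * exp (c r P n)`, and `P ≤ K = 1 / ((3/2)^α - 1)` together with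
`exp x ≤ 1 + x e^x` gives the claim with `C = c K e^(c K)`.
-/

open Real

lemma exp_le_one_add_mul_exp (x : ℝ) : exp x ≤ 1 + x * exp x := by
  have h := mul_le_mul_of_nonneg_right (one_sub_le_exp_neg x) (exp_pos x).le
  rw [← exp_add, neg_add_cancel, exp_zero] at h
  linarith

lemma div_sub_le_one_add {a N r : ℝ} (ha : 1 < a) (hN : a ≤ N) (hr0 : 0 ≤ r) (hr1 : r ≤ 1) :
    N / (N - r) ≤ 1 + a / (a - 1) * r / N := by
  have hN0 : 0 < N := by linarith
  have hNr : 0 < N - r := by linarith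
  have ha1 : 0 < a - 1 := by linarith
  have hgap : (1 + a / (a - 1) * r / N) * (N - r) - N = r * (N - a * r) / ((a - 1) * N) := by
    field_simp; ring
  have : 0 ≤ r * (N - a * r) / ((a - 1) * N) := by
    have : a * r ≤ N := by nlinarith
    positivity
  rw [div_le_iff₀ hNr]; linarith

lemma weighted_avg_le_max {p q u v : ℝ} (hp : 0 ≤ p) (hq : 0 ≤ q) (hpq : 0 < p + q) :
    (p * u + q * v) / (p + q) ≤ max u v := by
  rw [div_le_iff₀ hpq]
  nlinarith [le_max_left u v, le_max_right u v]

lemma recurrence_rhs_add_one_le {a N r p q u v : ℝ} (ha : 1 < a) (hN : a ≤ N) (hr0 : 0 ≤ r)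
    (hr1 : r ≤ 1) (hp : 0 ≤ p) (hq : 0 ≤ q) (hpq : 0 < p + q) (hu : 0 ≤ u) (hv : 0 ≤ v) :
    N / (N - r) * ((p * u + q * v) / (p + q)) + r / N + 1 ≤
      (1 + a / (a - 1) * r / N) * (max u v + 1) := by
  have hN0 : 0 < N := by linarith
  have hc : 1 ≤ a / (a - 1) := by rw [le_div_iff₀ (by linarith)]; linarith
  have hrN : r / N ≤ a / (a - 1) * r / N := by
    rw [mul_div_assoc]; exact le_mul_of_one_le_left (by positivity) hc
  calc N / (N - r) * ((p * u + q * v) / (p + q)) + r / N + 1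
      ≤ (1 + a / (a - 1) * r / N) * max u v + a / (a - 1) * r / N + 1 := by
        gcongr
        · exact div_sub_le_one_add ha hN hr0 hr1
        · exact weighted_avg_le_max hp hq hpq
    _ = (1 + a / (a - 1) * r / N) * (max u v + 1) := by ring

noncomputable def halvingPotential (α x : ℝ) : ℝ := (1 - (x ^ α)⁻¹) / ((3 / 2 : ℝ) ^ α - 1)

section halvingPotential

variable {α : ℝ}

lemma one_lt_three_halves_rpow (hα : 0 < α) : 1 < (3 / 2 : ℝ) ^ α := one_lt_rpow (by norm_num) hα

lemma halvingPotential_le (hα : 0 < α) {x : ℝ} (hx : 0 ≤ x) :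
    halvingPotential α x ≤ 1 / ((3 / 2 : ℝ) ^ α - 1) := by
  have := one_lt_three_halves_rpow hα
  unfold halvingPotential
  gcongr
  simp only [sub_le_self_iff, inv_nonneg]; positivity

lemma halvingPotential_mono (hα : 0 < α) {x y : ℝ} (hx : 0 < x) (hxy : x ≤ y) :
    halvingPotential α x ≤ halvingPotential α y := by
  have := one_lt_three_halves_rpow hα
  unfold halvingPotential
  gcongr

lemma inv_rpow_le_halvingPotential_sub (hα : 0 < α) {x y : ℝ} (hx : 0 < x) (hxy : 3 * x ≤ 2 * y) :
    (y ^ α)⁻¹ ≤ halvingPotential α y - halvingPotential α x := by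
  have h32 := one_lt_three_halves_rpow hα
  have hy : 0 < y := by linarith
  have hxy' : (3 / 2 : ℝ) ^ α * x ^ α ≤ y ^ α := by
    rw [← mul_rpow (by norm_num) hx.le]; gcongr; linarith
  have hinv : (3 / 2 : ℝ) ^ α * (y ^ α)⁻¹ ≤ (x ^ α)⁻¹ := by
    rw [← div_eq_mul_inv, ← one_div, div_le_div_iff₀ (by positivity) (by positivity)]
    linarith
  unfold halvingPotential
  rw [← sub_div, le_div_iff₀ (by linarith)]
  linarith

end halvingPotential

lemma le_mul_exp_sub_of_halving {β T : ℕ → ℝ} (hβ : 0 ≤ β 1)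
    (hT : ∀ m n, 1 ≤ m → m ≤ n → T m ≤ T n)
    (hstep : ∀ n, 2 ≤ n →
      β n ≤ exp (T n - T (n - n / 2)) * max (β (n / 2)) (β (n - n / 2))) :
    ∀ n, 1 ≤ n → β n ≤ β 1 * exp (T n - T 1) := by
  intro n
  induction n using Nat.strong_induction_on with
  | _ n ih =>
    intro hn
    obtain rfl | h2 : n = 1 ∨ 2 ≤ n := by omega
    · simp
    have hmax : max (β (n / 2)) (β (n - n / 2)) ≤ β 1 * exp (T (n - n / 2) - T 1) := by
      refine max_le ((ih _ (by omega) (by omega)).trans ?_) (ih _ (by omega) (by omega))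
      gcongr
      exact hT _ _ (by omega) (by omega)
    calc β n ≤ exp (T n - T (n - n / 2)) * max (β (n / 2)) (β (n - n / 2)) := hstep n h2
      _ ≤ exp (T n - T (n - n / 2)) * (β 1 * exp (T (n - n / 2) - T 1)) := by gcongr
      _ = β 1 * exp (T n - T 1) := by rw [mul_left_comm, ← exp_add]; ring_nf

def RecursiveBound (α r : ℝ) (B : ℕ → ℝ) : Prop :=
  ∀ m n : ℕ, 1 ≤ m → m ≤ n → n ≤ 2 * m →
    B (m + n) ≤ (((m : ℝ) + n) ^ α / (((m : ℝ) + n) ^ α - r)) *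
        (((m : ℝ) * B m + (n : ℝ) * B n) / ((m : ℝ) + n))
      + r / ((m : ℝ) + n) ^ α

section RecursiveBound

variable {α r : ℝ} {B : ℕ → ℝ}

lemma RecursiveBound.add_one_le_exp_mul_max (hrec : RecursiveBound α r B) (hα : 0 < α)
    (hB : ∀ n, 1 ≤ n → 0 ≤ B n) (hr0 : 0 ≤ r) (hr1 : r ≤ 1) {n : ℕ} (hn : 2 ≤ n) :
    B n + 1 ≤
      exp ((2 : ℝ) ^ α / (2 ^ α - 1) * r * halvingPotential α n -
        (2 : ℝ) ^ α / (2 ^ α - 1) * r * halvingPotential α ↑(n - n / 2)) *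
      max (B (n / 2) + 1) (B (n - n / 2) + 1) := by
  set c := (2 : ℝ) ^ α / (2 ^ α - 1) with hc
  set m := n / 2
  set k := n - n / 2
  have h2 : (1 : ℝ) < 2 ^ α := one_lt_rpow (by norm_num) hα
  have hmk : (m : ℝ) + k = n := by exact_mod_cast (by omega : m + k = n)
  have hN : (2 : ℝ) ^ α ≤ (n : ℝ) ^ α := by gcongr; exact_mod_cast hn
  have hmax : 0 ≤ max (B m) (B k) := le_max_of_le_left (hB m (by omega))
  have hrec' := hrec m k (by omega) (by omega) (by omega)
  rw [show m + k = n by omega, hmk] at hrec'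
  have hstep := recurrence_rhs_add_one_le h2 hN hr0 hr1 m.cast_nonneg k.cast_nonneg
    (by rw [hmk]; positivity) (hB m (by omega)) (hB k (by omega))
  rw [hmk, ← hc] at hstep
  have hgain : c * r / (n : ℝ) ^ α ≤
      c * r * halvingPotential α n - c * r * halvingPotential α k := by
    have : 0 ≤ c * r := mul_nonneg (div_nonneg (by positivity) (by linarith)) hr0
    rw [← mul_sub, div_eq_mul_inv]
    gcongr
    exact inv_rpow_le_halvingPotential_sub hα (by norm_cast; omega) (by norm_cast; omega)
  calc B n + 1 ≤ (1 + c * r / (n : ℝ) ^ α) * (max (B m) (B k) + 1) := by linarith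
    _ ≤ exp (c * r / (n : ℝ) ^ α) * (max (B m) (B k) + 1) := by
        gcongr
        linarith [add_one_le_exp (c * r / (n : ℝ) ^ α)]
    _ ≤ _ := by rw [max_add_add_right]; gcongr

lemma RecursiveBound.add_one_le_mul_exp (hrec : RecursiveBound α r B) (hα : 0 < α)
    (hB : ∀ n, 1 ≤ n → 0 ≤ B n) (hr0 : 0 ≤ r) (hr1 : r ≤ 1) {n : ℕ} (hn : 1 ≤ n) :
    B n + 1 ≤ (B 1 + 1) * exp ((2 : ℝ) ^ α / (2 ^ α - 1) * r * halvingPotential α n) := by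
  have hc : 0 ≤ (2 : ℝ) ^ α / (2 ^ α - 1) * r :=
    mul_nonneg (div_nonneg (by positivity) (by linarith [one_lt_rpow one_lt_two hα])) hr0
  have hT : ∀ m n : ℕ, 1 ≤ m → m ≤ n →
      (2 : ℝ) ^ α / (2 ^ α - 1) * r * halvingPotential α m ≤
        (2 : ℝ) ^ α / (2 ^ α - 1) * r * halvingPotential α n := fun m n hm hmn => by
    gcongr
    exact halvingPotential_mono hα (by exact_mod_cast hm) (by exact_mod_cast hmn)
  simpa [halvingPotential] using le_mul_exp_sub_of_halving (β := fun n => B n + 1)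
    (by linarith [hB 1 le_rfl]) hT (fun _ hn => hrec.add_one_le_exp_mul_max hα hB hr0 hr1 hn) n hn

end RecursiveBound

/-- Lemma 8.3: for every `α > 0` there exists a constant `C_α` (depending on `α` only)
such that: whenever nonnegative numbers `B_1, B_2, …` and `r ∈ [0,1]` satisfy
`B_{m+n} ≤ ((m+n)^α/((m+n)^α - r)) (m B_m + n B_n)/(m+n) + r/(m+n)^α`
for all `m ≤ n ≤ 2m`, one has `sup_n B_n ≤ (1 + C_α r) B_1 + C_α r`. -/
theorem recursive_upper_bound (α : ℝ) (hα : 0 < α) :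
    ∃ C : ℝ, ∀ (B : ℕ → ℝ) (r : ℝ),
      (∀ n, 1 ≤ n → 0 ≤ B n) → 0 ≤ r → r ≤ 1 →
      (∀ m n : ℕ, 1 ≤ m → m ≤ n → n ≤ 2 * m →
        B (m + n) ≤ (((m : ℝ) + n) ^ α / (((m : ℝ) + n) ^ α - r)) *
            (((m : ℝ) * B m + (n : ℝ) * B n) / ((m : ℝ) + n))
          + r / ((m : ℝ) + n) ^ α) →
      ∀ n, 1 ≤ n → B n ≤ (1 + C * r) * B 1 + C * r := by
  set c := (2 : ℝ) ^ α / (2 ^ α - 1)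
  set K := 1 / ((3 / 2 : ℝ) ^ α - 1)
  have hc : 0 ≤ c := div_nonneg (by positivity) (by linarith [one_lt_rpow one_lt_two hα])
  have hK : 0 ≤ K := div_nonneg zero_le_one (by linarith [one_lt_three_halves_rpow hα])
  refine ⟨c * K * exp (c * K), fun B r hB hr0 hr1 hrec n hn => ?_⟩
  have hgrowth : B n + 1 ≤ (B 1 + 1) * exp (c * r * halvingPotential α n) :=
    RecursiveBound.add_one_le_mul_exp hrec hα hB hr0 hr1 hn
  have hexp : exp (c * r * halvingPotential α n) ≤ 1 + c * K * exp (c * K) * r :=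
    calc exp (c * r * halvingPotential α n) ≤ exp (c * K * r) := by
          rw [mul_right_comm]; gcongr; exact halvingPotential_le hα n.cast_nonneg
      _ ≤ 1 + c * K * r * exp (c * K * r) := exp_le_one_add_mul_exp _
      _ ≤ 1 + c * K * r * exp (c * K) := by
          gcongr 1 + _ * exp ?_; exact mul_le_of_le_one_right (by positivity) hr1
      _ = 1 + c * K * exp (c * K) * r := by ring
  have := mul_le_mul_of_nonneg_left hexp (by linarith [hB 1 le_rfl] : 0 ≤ B 1 + 1)
  linarith
end

section
/- Let numbers A_1, A_2, … ∈ [0,∞), α ∈ (0,∞) and r ∈ [0,1] satisfy A_{m+n} ≥ (((m+n)^α − r)/(m+n)^α) · (m A_m + n A_n)/(m+n) − r/(m+n)^α for all m, n with m ≤ n ≤ 2m. Then inf_n A_n ≥ (1 − C_α r) A_1 − C_α r for some constant C_α depending on α only. -/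
set_option maxHeartbeats 2000000 in
/-- Lemma 8.4: for every `α > 0` there exists a constant `C_α` (depending on `α` only)
such that: whenever nonnegative numbers `A_1, A_2, …` and `r ∈ [0,1]` satisfy
`A_{m+n} ≥ (((m+n)^α - r)/(m+n)^α) (m A_m + n A_n)/(m+n) - r/(m+n)^α`
for all `m ≤ n ≤ 2m`, one has `inf_n A_n ≥ (1 - C_α r) A_1 - C_α r`. -/
theorem recursive_lower_bound (α : ℝ) (hα : 0 < α) :
    ∃ C : ℝ, ∀ (A : ℕ → ℝ) (r : ℝ),
      (∀ n, 1 ≤ n → 0 ≤ A n) → 0 ≤ r → r ≤ 1 →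
      (∀ m n : ℕ, 1 ≤ m → m ≤ n → n ≤ 2 * m →
        A (m + n) ≥ ((((m : ℝ) + n) ^ α - r) / ((m : ℝ) + n) ^ α) *
            (((m : ℝ) * A m + (n : ℝ) * A n) / ((m : ℝ) + n))
          - r / ((m : ℝ) + n) ^ α) →
      ∀ n, 1 ≤ n → A n ≥ (1 - C * r) * A 1 - C * r := by
  have h32 : (1:ℝ) < (3/2:ℝ) ^ α :=
    (Real.one_lt_rpow_iff_of_pos (by norm_num)).2 (Or.inl ⟨by norm_num, hα⟩)
  set C : ℝ := ((3/2:ℝ) ^ α - 1)⁻¹ with hCdef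
  have hC : 0 < C := inv_pos.2 (by linarith)
  refine ⟨C, ?_⟩
  intro A r hA hr0 hr1 hrec
  have hp : ∀ j : ℕ, 1 ≤ j → 1 ≤ ((j:ℝ)) ^ α := by
    intro j hj
    exact Real.one_le_rpow (by exact_mod_cast hj) hα.le
  have key : ∀ n : ℕ, 1 ≤ n →
      A n + 1 ≥ (1 - r * (C * (1 - (((n:ℝ)) ^ α)⁻¹))) * (A 1 + 1) := by
    intro n
    induction n using Nat.strong_induction_on with
    | _ n ih =>
      intro hn
      rcases eq_or_lt_of_le hn with h1 | h2
      · rw [← h1]; norm_num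
      · -- n ≥ 2
        set m := n / 2 with hmdef
        set k := (n + 1) / 2 with hkdef
        have hmk : m + k = n := by omega
        have h1m : 1 ≤ m := by omega
        have h1k : 1 ≤ k := by omega
        have hmlek : m ≤ k := by omega
        have hkle : k ≤ 2 * m := by omega
        have h3k : 3 * k ≤ 2 * n := by omega
        have hr' := hrec m k h1m hmlek hkle
        rw [hmk] at hr'
        have e : ((m:ℝ)) + ((k:ℝ)) = ((n:ℝ)) := by exact_mod_cast congrArg (Nat.cast : ℕ → ℝ) hmk
        rw [e] at hr'
        have hPn : 1 ≤ ((n:ℝ)) ^ α := hp n hn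
        have hPk : 1 ≤ ((k:ℝ)) ^ α := hp k h1k
        have hPm : 1 ≤ ((m:ℝ)) ^ α := hp m h1m
        have hPn0 : (0:ℝ) < ((n:ℝ)) ^ α := by linarith
        have hPk0 : (0:ℝ) < ((k:ℝ)) ^ α := by linarith
        set q : ℝ := (((n:ℝ)) ^ α)⁻¹ with hqdef
        set qk : ℝ := (((k:ℝ)) ^ α)⁻¹ with hqkdef
        set qm : ℝ := (((m:ℝ)) ^ α)⁻¹ with hqmdef
        have hq0 : 0 < q := by positivity
        have hq1 : q ≤ 1 := by rw [hqdef]; exact inv_le_one_of_one_le₀ hPn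
        have hqk0 : 0 < qk := by positivity
        have hqk1 : qk ≤ 1 := by rw [hqkdef]; exact inv_le_one_of_one_le₀ hPk
        have hqm1 : qm ≤ 1 := by rw [hqmdef]; exact inv_le_one_of_one_le₀ hPm
        have hqmk : qk ≤ qm := by
          rw [hqkdef, hqmdef]
          exact inv_anti₀ (by linarith)
            (Real.rpow_le_rpow (by positivity) (by exact_mod_cast hmlek) hα.le)
        -- key inequality: (1+C) q ≤ C qk
        have hkey : (1 + C) * q ≤ C * qk := by
          have hk23 : ((k:ℝ)) ≤ 2/3 * ((n:ℝ)) := by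
            have : ((3 * k : ℕ) : ℝ) ≤ ((2 * n : ℕ) : ℝ) := by exact_mod_cast h3k
            push_cast at this; linarith
          have h23 : ((2/3:ℝ) ^ α) = ((3/2:ℝ) ^ α)⁻¹ := by
            rw [← Real.inv_rpow (by norm_num)]; norm_num
          have h32pos : (0:ℝ) < (3/2:ℝ) ^ α := by linarith
          have h1' : (3/2:ℝ) ^ α * ((k:ℝ)) ^ α ≤ ((n:ℝ)) ^ α := by
            have h1 : ((k:ℝ)) ^ α ≤ ((3/2:ℝ) ^ α)⁻¹ * ((n:ℝ)) ^ α := by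
              calc ((k:ℝ)) ^ α ≤ ((2/3 * (n:ℝ))) ^ α :=
                    Real.rpow_le_rpow (by positivity) hk23 hα.le
                _ = (2/3 : ℝ) ^ α * ((n:ℝ)) ^ α := Real.mul_rpow (by norm_num) (by positivity)
                _ = ((3/2:ℝ) ^ α)⁻¹ * ((n:ℝ)) ^ α := by rw [h23]
            calc (3/2:ℝ) ^ α * ((k:ℝ)) ^ α
                ≤ (3/2:ℝ) ^ α * (((3/2:ℝ) ^ α)⁻¹ * ((n:ℝ)) ^ α) :=
                  mul_le_mul_of_nonneg_left h1 h32pos.le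
              _ = ((n:ℝ)) ^ α := by field_simp
          have h2 : (3/2:ℝ) ^ α * q ≤ qk := by
            rw [hqdef, hqkdef]
            calc (3/2:ℝ) ^ α * (((n:ℝ)) ^ α)⁻¹
                ≤ (3/2:ℝ) ^ α * ((3/2:ℝ) ^ α * ((k:ℝ)) ^ α)⁻¹ :=
                  mul_le_mul_of_nonneg_left (inv_anti₀ (by positivity) h1') h32pos.le
              _ = (((k:ℝ)) ^ α)⁻¹ := by
                  rw [mul_inv]
                  field_simp
          have hC32 : C * (3/2:ℝ) ^ α = 1 + C := by
            have hCC : C * ((3/2:ℝ) ^ α - 1) = 1 :=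
              inv_mul_cancel₀ (ne_of_gt (by linarith))
            linear_combination hCC
          calc (1 + C) * q = C * ((3/2:ℝ) ^ α * q) := by rw [← hC32]; ring
            _ ≤ C * qk := mul_le_mul_of_nonneg_left h2 hC.le
        have hq1' : 0 ≤ 1 - r * q := by nlinarith
        have hn0 : (0:ℝ) < ((n:ℝ)) := by
          exact_mod_cast Nat.lt_of_lt_of_le Nat.zero_lt_one hn
        -- B-form of the recursion
        have hrB : A n + 1 ≥ (1 - r * q) *
            (((m:ℝ) * (A m + 1) + (k:ℝ) * (A k + 1)) / ((n:ℝ))) := by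
          have em : (m:ℝ) * (A m + 1) + (k:ℝ) * (A k + 1)
              = ((m:ℝ) * A m + (k:ℝ) * A k) + (n:ℝ) := by rw [← e]; ring
          have hfrac : (((n:ℝ)) ^ α - r) / ((n:ℝ)) ^ α = 1 - r * q := by
            rw [hqdef]; field_simp
          have hrq : r / ((n:ℝ)) ^ α = r * q := by rw [hqdef, div_eq_mul_inv]
          rw [em, add_div, div_self hn0.ne', mul_add, mul_one]
          rw [hfrac, hrq] at hr'
          linarith
        -- bound the weighted average via IH
        have ihm := ih m (by omega) h1m
        have ihk := ih k (by omega) h1k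
        have hB1 : 0 ≤ A 1 + 1 := by have := hA 1 le_rfl; linarith
        have ihm' : A m + 1 ≥ (1 - r * (C * (1 - qk))) * (A 1 + 1) := by
          refine le_trans ?_ ihm
          refine mul_le_mul_of_nonneg_right ?_ hB1
          nlinarith [mul_nonneg (mul_nonneg hr0 hC.le) (sub_nonneg.2 hqmk)]
        have havg : ((m:ℝ) * (A m + 1) + (k:ℝ) * (A k + 1)) / ((n:ℝ))
            ≥ (1 - r * (C * (1 - qk))) * (A 1 + 1) := by
          rw [ge_iff_le, le_div_iff₀ hn0]
          have hm0 : (0:ℝ) ≤ (m:ℝ) := by positivity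
          have hk0 : (0:ℝ) ≤ (k:ℝ) := by positivity
          have esum : (1 - r * (C * (1 - qk))) * (A 1 + 1) * ((n:ℝ))
              = (m:ℝ) * ((1 - r * (C * (1 - qk))) * (A 1 + 1))
                + (k:ℝ) * ((1 - r * (C * (1 - qk))) * (A 1 + 1)) := by
            rw [← e]; ring
          linarith [mul_le_mul_of_nonneg_left ihm' hm0, mul_le_mul_of_nonneg_left ihk hk0]
        have step1 : A n + 1 ≥ (1 - r * q) * ((1 - r * (C * (1 - qk))) * (A 1 + 1)) :=
          le_trans (mul_le_mul_of_nonneg_left havg hq1') hrB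
        have scal : (1 - r * (C * (1 - q))) ≤ (1 - r * q) * (1 - r * (C * (1 - qk))) := by
          have t1 : 0 ≤ r * (C * qk - C * q - q) :=
            mul_nonneg hr0 (by nlinarith [hkey])
          have t2 : 0 ≤ r * r * q * (C * (1 - qk)) :=
            mul_nonneg (mul_nonneg (mul_nonneg hr0 hr0) hq0.le)
              (mul_nonneg hC.le (by linarith))
          have expand : (1 - r * q) * (1 - r * (C * (1 - qk)))
              = 1 - r * (C * (1 - q)) + r * (C * qk - C * q - q)
                + r * r * q * (C * (1 - qk)) := by ring
          rw [expand]
          linarith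
        calc (1 - r * (C * (1 - q))) * (A 1 + 1)
            ≤ ((1 - r * q) * (1 - r * (C * (1 - qk)))) * (A 1 + 1) :=
              mul_le_mul_of_nonneg_right scal hB1
          _ = (1 - r * q) * ((1 - r * (C * (1 - qk))) * (A 1 + 1)) := by ring
          _ ≤ A n + 1 := step1
  intro n hn
  have h := key n hn
  have hA1 := hA 1 le_rfl
  have hPn : 1 ≤ ((n:ℝ)) ^ α := hp n hn
  have hq0 : (0:ℝ) ≤ (((n:ℝ)) ^ α)⁻¹ := by positivity
  have hq1 : (((n:ℝ)) ^ α)⁻¹ ≤ 1 := inv_le_one_of_one_le₀ hPn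
  nlinarith [h, mul_nonneg (mul_nonneg (mul_nonneg hr0 hC.le) hq0)
    (by linarith : (0:ℝ) ≤ A 1 + 1)]
end
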